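/- arXiv:1901.01018 — 4 statements merged into one kernel-verified Lean document; each statement's English description precedes it below -/
import Mathlib

section
/- Let G, U ⊆ ℝ^d be open, g : G → U a diffeomorphism with a ≤ |det g'| ≤ b on G for positive constants a, b, and let 𝒩 be a Young function. Then for every Bochner measurable f : g[G] → X one has min{a,1}·‖f∘g‖_{L^𝒩(G;X)} ≤ ‖f‖_{L^𝒩(g[G];X)} ≤ max{b,1}·‖f∘g‖_{L^𝒩(G;X)}. -/
/-! By the change of variables formula, `a ≤ |det g'| ≤ b` compares the Orlicz modulars
`∫ N(‖f‖/λ)` over `g[G]` and of `f ∘ g` over `G` up to the factors `b` and `1/a`. Convexity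
of `N` with `N 0 = 0` gives `N(t/c) ≤ N(t)/c` for `c ≥ 1`, so enlarging the scale `λ` by the
factor `c = max{b, 1}` (resp. `max{1/a, 1}`) absorbs that factor in the Luxemburg norm. -/

open MeasureTheory ENNReal Filter Set

/-- The Luxemburg norm of `f` with respect to the Young function `N` and measure `μ`. -/
noncomputable def luxNorm {U X : Type*} [MeasurableSpace U] [NormedAddCommGroup X]
    (N : ℝ → ℝ) (μ : Measure U) (f : U → X) : ℝ≥0∞ :=
  ⨅ (l : ℝ) (_ : 0 < l ∧ ∫⁻ u, ENNReal.ofReal (N (‖f u‖ / l)) ∂μ ≤ 1),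
    ENNReal.ofReal l

theorem ConvexOn.map_smul_le_smul_of_map_zero {𝕜 E β : Type*} [Ring 𝕜] [PartialOrder 𝕜] [IsOrderedRing 𝕜]
    [AddCommMonoid E] [AddCommMonoid β] [PartialOrder β] [Module 𝕜 E] [Module 𝕜 β]
    {s : Set E} {f : E → β} (hf : ConvexOn 𝕜 s f) (h0 : (0 : E) ∈ s) (hf0 : f 0 = 0)
    {x : E} (hx : x ∈ s) {t : 𝕜} (ht0 : 0 ≤ t) (ht1 : t ≤ 1) : f (t • x) ≤ t • f x := by
  have := hf.2 hx h0 ht0 (sub_nonneg.2 ht1) (add_sub_cancel t 1)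
  simpa [hf0] using this

theorem min_mul_max_inv_eq_one {a : ℝ} (ha : 0 < a) : min a 1 * max a⁻¹ 1 = 1 := by
  rcases le_total a 1 with h | h
  · rw [min_eq_left h, max_eq_left (one_le_inv₀ ha |>.2 h), mul_inv_cancel₀ ha.ne']
  · rw [min_eq_right h, max_eq_right (inv_le_one_of_one_le₀ h), one_mul]

section Orlicz

variable {U V X Y : Type*} [MeasurableSpace U] [MeasurableSpace V]
  [NormedAddCommGroup X] [NormedAddCommGroup Y] {N : ℝ → ℝ}

noncomputable def orliczModular (N : ℝ → ℝ) (μ : Measure U) (f : U → X) (l : ℝ) : ℝ≥0∞ :=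
  ∫⁻ u, ENNReal.ofReal (N (‖f u‖ / l)) ∂μ

theorem luxNorm_eq_iInf_orliczModular (μ : Measure U) (f : U → X) :
    luxNorm N μ f = ⨅ (l : ℝ) (_ : 0 < l ∧ orliczModular N μ f l ≤ 1), ENNReal.ofReal l :=
  rfl

theorem orliczModular_mul_le (hN0 : N 0 = 0) (hconv : ConvexOn ℝ (Ici 0) N)
    (μ : Measure U) (f : U → X) {c l : ℝ} (hc : 1 ≤ c) (hl : 0 ≤ l) :
    orliczModular N μ f (c * l) ≤ (ENNReal.ofReal c)⁻¹ * orliczModular N μ f l := by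
  have hc0 : 0 < c := one_pos.trans_le hc
  rw [orliczModular, orliczModular, ← lintegral_const_mul' _ _ (inv_ne_top.2 (by positivity))]
  refine lintegral_mono fun u => ?_
  have hscale : N (‖f u‖ / (c * l)) ≤ c⁻¹ * N (‖f u‖ / l) := by
    rw [mul_comm c l, ← div_div, div_eq_inv_mul _ c]
    exact hconv.map_smul_le_smul_of_map_zero (mem_Ici.2 le_rfl) hN0
      (mem_Ici.2 (by positivity)) (by positivity) (inv_le_one_of_one_le₀ hc)
  calc ENNReal.ofReal (N (‖f u‖ / (c * l)))
      ≤ ENNReal.ofReal (c⁻¹ * N (‖f u‖ / l)) := ENNReal.ofReal_le_ofReal hscale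
    _ ≤ (ENNReal.ofReal c)⁻¹ * ENNReal.ofReal (N (‖f u‖ / l)) := by
      rw [ENNReal.ofReal_mul (by positivity), ofReal_inv_of_pos hc0]

theorem luxNorm_le_max_mul_of_orliczModular_le (hN0 : N 0 = 0)
    (hconv : ConvexOn ℝ (Ici 0) N) {ν : Measure V} {μ : Measure U} {f : V → Y} {h : U → X}
    {c : ℝ} (hmod : ∀ l, 0 < l → orliczModular N ν f l ≤ ENNReal.ofReal c * orliczModular N μ h l) :
    luxNorm N ν f ≤ ENNReal.ofReal (max c 1) * luxNorm N μ h := by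
  set k := max c 1
  have hk1 : 1 ≤ k := le_max_right c 1
  have hk0 : 0 < k := one_pos.trans_le hk1
  rw [luxNorm_eq_iInf_orliczModular, luxNorm_eq_iInf_orliczModular,
    mul_iInf_of_ne (by positivity) ofReal_ne_top]
  simp only [mul_iInf_of_ne (ENNReal.ofReal_pos.2 hk0).ne' ofReal_ne_top]
  refine le_iInf₂ fun l ⟨hl0, hl1⟩ => iInf₂_le_of_le (k * l) ⟨by positivity, ?_⟩ ?_
  · calc orliczModular N ν f (k * l)
        ≤ ENNReal.ofReal c * ((ENNReal.ofReal k)⁻¹ * orliczModular N μ h l) :=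
          (hmod _ (by positivity)).trans
            (mul_le_mul_right (orliczModular_mul_le hN0 hconv μ h hk1 hl0.le) _)
      _ = ENNReal.ofReal c / ENNReal.ofReal k * orliczModular N μ h l := by
          rw [div_eq_mul_inv, mul_assoc]
      _ ≤ 1 * 1 := mul_le_mul' (div_le_of_le_mul
          (by rw [one_mul]; exact ENNReal.ofReal_le_ofReal (le_max_left c 1))) hl1
      _ = 1 := one_mul 1
  · rw [ENNReal.ofReal_mul hk0.le]

end Orlicz

section ChangeOfVariables

variable {E : Type*} [NormedAddCommGroup E] [NormedSpace ℝ E] [FiniteDimensional ℝ E]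
  [MeasurableSpace E] [BorelSpace E] (μ : Measure E) [μ.IsAddHaarMeasure]
  {s : Set E} {g : E → E} {g' : E → E →L[ℝ] E}

theorem lintegral_image_le_mul_of_abs_det_le (hs : MeasurableSet s)
    (hg' : ∀ x ∈ s, HasFDerivWithinAt g (g' x) s x) (hg : InjOn g s) {b : ℝ}
    (hdet : ∀ x ∈ s, |(g' x).det| ≤ b) (F : E → ℝ≥0∞) :
    ∫⁻ y in g '' s, F y ∂μ ≤ ENNReal.ofReal b * ∫⁻ x in s, F (g x) ∂μ := by
  rw [lintegral_image_eq_lintegral_abs_det_fderiv_mul μ hs hg' hg,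
    ← lintegral_const_mul' _ _ ofReal_ne_top]
  exact setLIntegral_mono' hs fun x hx => by gcongr; exact hdet x hx

theorem lintegral_comp_le_inv_mul_of_le_abs_det (hs : MeasurableSet s)
    (hg' : ∀ x ∈ s, HasFDerivWithinAt g (g' x) s x) (hg : InjOn g s) {a : ℝ} (ha : 0 < a)
    (hdet : ∀ x ∈ s, a ≤ |(g' x).det|) (F : E → ℝ≥0∞) :
    ∫⁻ x in s, F (g x) ∂μ ≤ ENNReal.ofReal a⁻¹ * ∫⁻ y in g '' s, F y ∂μ := by
  rw [lintegral_image_eq_lintegral_abs_det_fderiv_mul μ hs hg' hg,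
    ← lintegral_const_mul' _ _ ofReal_ne_top]
  refine setLIntegral_mono' hs fun x hx => ?_
  have hone : 1 ≤ ENNReal.ofReal a⁻¹ * ENNReal.ofReal |(g' x).det| := by
    rw [← ENNReal.ofReal_mul (by positivity), ← ENNReal.ofReal_one]
    exact ENNReal.ofReal_le_ofReal ((one_le_inv_mul₀ ha).2 (hdet x hx))
  calc F (g x) = 1 * F (g x) := (one_mul _).symm
    _ ≤ _ := by rw [← mul_assoc]; gcongr

end ChangeOfVariables

theorem stmt1_general {d : ℕ} {X : Type*} [NormedAddCommGroup X]
    (G : Set (EuclideanSpace ℝ (Fin d))) (hG : IsOpen G)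
    (g : EuclideanSpace ℝ (Fin d) → EuclideanSpace ℝ (Fin d))
    (hginj : Set.InjOn g G)
    (g' : EuclideanSpace ℝ (Fin d) → (EuclideanSpace ℝ (Fin d) →L[ℝ] EuclideanSpace ℝ (Fin d)))
    (hg' : ∀ x ∈ G, HasFDerivAt g (g' x) x)
    (a b : ℝ) (ha : 0 < a)
    (hdet : ∀ x ∈ G, a ≤ |(g' x).det| ∧ |(g' x).det| ≤ b)
    (N : ℝ → ℝ)
    (hN0 : N 0 = 0) (hconv : ConvexOn ℝ (Ici 0) N)
    (f : EuclideanSpace ℝ (Fin d) → X) :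
    ENNReal.ofReal (min a 1) * luxNorm N (volume.restrict G) (f ∘ g) ≤
      luxNorm N (volume.restrict (g '' G)) f ∧
    luxNorm N (volume.restrict (g '' G)) f ≤
      ENNReal.ofReal (max b 1) * luxNorm N (volume.restrict G) (f ∘ g) := by
  have hg'G : ∀ x ∈ G, HasFDerivWithinAt g (g' x) G x := fun x hx => (hg' x hx).hasFDerivWithinAt
  have hmod_comp : ∀ l, orliczModular N (volume.restrict G) (f ∘ g) l ≤
      ENNReal.ofReal a⁻¹ * orliczModular N (volume.restrict (g '' G)) f l := fun _ =>
    lintegral_comp_le_inv_mul_of_le_abs_det volume hG.measurableSet hg'G hginj ha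
      (fun x hx => (hdet x hx).1) _
  have hmod_image : ∀ l, orliczModular N (volume.restrict (g '' G)) f l ≤
      ENNReal.ofReal b * orliczModular N (volume.restrict G) (f ∘ g) l := fun _ =>
    lintegral_image_le_mul_of_abs_det_le volume hG.measurableSet hg'G hginj
      (fun x hx => (hdet x hx).2) _
  refine ⟨?_, luxNorm_le_max_mul_of_orliczModular_le hN0 hconv fun l _ => hmod_image l⟩
  calc ENNReal.ofReal (min a 1) * luxNorm N (volume.restrict G) (f ∘ g)
      ≤ ENNReal.ofReal (min a 1) *
          (ENNReal.ofReal (max a⁻¹ 1) * luxNorm N (volume.restrict (g '' G)) f) := by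
        gcongr
        exact luxNorm_le_max_mul_of_orliczModular_le hN0 hconv fun l _ => hmod_comp l
    _ = luxNorm N (volume.restrict (g '' G)) f := by
        rw [← mul_assoc, ← ENNReal.ofReal_mul (by positivity), min_mul_max_inv_eq_one ha,
          ENNReal.ofReal_one, one_mul]

/-- Scaling of Orlicz (Luxemburg) norms under a diffeomorphism `g : G → g[G]` with
`a ≤ |det g'| ≤ b`:
`min{a,1} ‖f ∘ g‖_{L^N(G)} ≤ ‖f‖_{L^N(g[G])} ≤ max{b,1} ‖f ∘ g‖_{L^N(G)}`. -/
theorem stmt1 {d : ℕ} {X : Type*} [NormedAddCommGroup X]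
    (G : Set (EuclideanSpace ℝ (Fin d))) (hG : IsOpen G)
    (g : EuclideanSpace ℝ (Fin d) → EuclideanSpace ℝ (Fin d))
    (hU : IsOpen (g '' G)) (hginj : Set.InjOn g G)
    (g' : EuclideanSpace ℝ (Fin d) → (EuclideanSpace ℝ (Fin d) →L[ℝ] EuclideanSpace ℝ (Fin d)))
    (hg' : ∀ x ∈ G, HasFDerivAt g (g' x) x)
    (hginv : ContinuousOn (Function.invFunOn g G) (g '' G))
    (a b : ℝ) (ha : 0 < a) (hb : 0 < b)
    (hdet : ∀ x ∈ G, a ≤ |(g' x).det| ∧ |(g' x).det| ≤ b)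
    (N : ℝ → ℝ)
    (hN0 : N 0 = 0) (hmono : MonotoneOn N (Ici 0)) (hconv : ConvexOn ℝ (Ici 0) N)
    (hnonneg : ∀ x ∈ Ici (0:ℝ), 0 ≤ N x) (htop : Tendsto N atTop atTop)
    (f : EuclideanSpace ℝ (Fin d) → X) (hf : AEStronglyMeasurable f (volume.restrict (g '' G))) :
    ENNReal.ofReal (min a 1) * luxNorm N (volume.restrict G) (f ∘ g) ≤
      luxNorm N (volume.restrict (g '' G)) f ∧
    luxNorm N (volume.restrict (g '' G)) f ≤
      ENNReal.ofReal (max b 1) * luxNorm N (volume.restrict G) (f ∘ g) :=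
  stmt1_general G hG g hginj g' hg' a b ha hdet N hN0 hconv f
end

section
/- Let κ > 0, p ∈ [1,∞), and N(t) = t^p·log^{p/2}(t+1). If A and B are nonnegative random variables satisfying ℙ(A ≥ x, B ≤ y) ≤ 2·exp(−κ y^{−2} x²) for all x, y > 0, then ‖A‖_{L^p(Ω)} ≤ 10·p^{1/2}·κ^{−1/2}·‖B‖_{L^N(Ω)}, where ‖·‖_{L^N} denotes the Luxemburg norm for the Young function N. -/
open MeasureTheory ENNReal Filter Set

/-!
After rescaling we may assume `𝔼 N(|B|) ≤ 1`: the Luxemburg norm is homogeneous and the tail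
hypothesis is scale invariant. Put `D = 2 √(p/κ)` and `φ(u) = D u √(log (u + 1) + 1)`. For `t > 0`
pick `u` with `φ(u) = t` and split `{A ≥ t} ⊆ {A ≥ t, B ≤ u} ∪ {φ(B) ≥ t}`. The first event has
probability at most `2 e^{-4p} (u + 1)^{-4p} ≤ min(1, (D/t)^{2p}) / 2`, which contributes `D^p`
to `𝔼 A^p = ∫ p t^{p-1} ℙ(A ≥ t) dt`; the second contributes `𝔼 φ(B)^p ≤ (2D)^p (1 + 𝔼 N(B))`.
Superadditivity of `x ↦ x^p` then gives `D^p + 2 (2D)^p ≤ (5D)^p`.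
-/

open Real

/-- When `κ D² = 4p`, the choice `t = tailScale D u` makes `κ t² / u² = 4p (log (u + 1) + 1)`, so
the Gaussian tail `2 exp (-κ t² / u²)` becomes `2 e^{-4p} (u + 1)^{-4p}`. -/
noncomputable def tailScale (D u : ℝ) : ℝ := D * u * √(Real.log (u + 1) + 1)

lemma one_le_sqrt_log_add_one_add_one {u : ℝ} (hu : 0 ≤ u) : 1 ≤ √(Real.log (u + 1) + 1) :=
  one_le_sqrt.mpr (by linarith [Real.log_nonneg (by linarith : (1:ℝ) ≤ u + 1)])

lemma tailScale_strictMonoOn {D : ℝ} (hD : 0 < D) : StrictMonoOn (tailScale D) (Ici 0) := by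
  intro a (ha : 0 ≤ a) b (hb : 0 ≤ b) hab
  have hlog : Real.log (a + 1) ≤ Real.log (b + 1) := Real.log_le_log (by linarith) (by linarith)
  have hb1 := one_le_sqrt_log_add_one_add_one hb
  unfold tailScale
  rw [mul_assoc, mul_assoc]
  refine mul_lt_mul_of_pos_left ?_ hD
  calc a * √(Real.log (a + 1) + 1) ≤ a * √(Real.log (b + 1) + 1) := by gcongr
    _ < b * √(Real.log (b + 1) + 1) := by gcongr

lemma tailScale_pos {D u : ℝ} (hD : 0 < D) (hu : 0 < u) : 0 < tailScale D u := by
  have := one_le_sqrt_log_add_one_add_one hu.le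
  unfold tailScale; positivity

lemma tailScale_nonneg {D u : ℝ} (hD : 0 ≤ D) (hu : 0 ≤ u) : 0 ≤ tailScale D u := by
  unfold tailScale; positivity

lemma continuousOn_tailScale (D : ℝ) : ContinuousOn (tailScale D) (Ici 0) := by
  have : ∀ u ∈ Ici (0:ℝ), u + 1 ≠ 0 := fun u (hu : 0 ≤ u) => by positivity
  unfold tailScale
  fun_prop (disch := assumption)

lemma measurable_tailScale (D : ℝ) : Measurable (tailScale D) := by
  unfold tailScale; fun_prop

lemma exists_tailScale_eq {D t : ℝ} (hD : 0 < D) (ht : 0 < t) : ∃ u > 0, tailScale D u = t := by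
  have htD : 0 ≤ t / D := by positivity
  have hle : t ≤ tailScale D (t / D) := by
    have := one_le_sqrt_log_add_one_add_one htD
    calc t = D * (t / D) * 1 := by field_simp
      _ ≤ tailScale D (t / D) := by unfold tailScale; gcongr
  obtain ⟨u, hu, rfl⟩ := intermediate_value_Icc htD
    ((continuousOn_tailScale D).mono Icc_subset_Ici_self)
    ⟨by simp [tailScale, ht.le], hle⟩
  refine ⟨u, hu.1.lt_of_ne ?_, rfl⟩
  rintro rfl
  simp [tailScale] at ht

lemma tailScale_le_mul_add_one_sq {D u : ℝ} (hD : 0 ≤ D) (hu : 0 ≤ u) :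
    tailScale D u ≤ D * (u + 1) ^ 2 := by
  have hlog : Real.log (u + 1) ≤ u := by
    linarith [Real.log_le_sub_one_of_pos (by linarith : 0 < u + 1)]
  have hsqrt : √(Real.log (u + 1) + 1) ≤ u + 1 := by
    rw [sqrt_le_left (by linarith)]
    nlinarith
  unfold tailScale
  rw [mul_assoc, sq]
  gcongr
  linarith

lemma rpow_mul_log_add_one_add_one_rpow_le {p u : ℝ} (hp : 0 ≤ p) (hu : 0 ≤ u) :
    u ^ p * (Real.log (u + 1) + 1) ^ (p / 2) ≤
      4 ^ (p / 2) * (1 + u ^ p * Real.log (u + 1) ^ (p / 2)) := by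
  have hlog0 : 0 ≤ Real.log (u + 1) := Real.log_nonneg (by linarith)
  have hN : 0 ≤ u ^ p * Real.log (u + 1) ^ (p / 2) := by positivity
  rcases le_or_gt u 1 with hu1 | hu1
  · have hlog : Real.log (u + 1) + 1 ≤ 4 := by
      linarith [Real.log_le_sub_one_of_pos (by linarith : 0 < u + 1)]
    calc u ^ p * (Real.log (u + 1) + 1) ^ (p / 2) ≤ 1 * 4 ^ (p / 2) := by
          gcongr
          exact rpow_le_one hu hu1 hp
      _ ≤ 4 ^ (p / 2) * (1 + u ^ p * Real.log (u + 1) ^ (p / 2)) := by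
          nlinarith [rpow_nonneg (by norm_num : (0:ℝ) ≤ 4) (p / 2)]
  · have hlog : Real.log (u + 1) + 1 ≤ 4 * Real.log (u + 1) := by
      have := Real.log_le_log two_pos (by linarith : (2:ℝ) ≤ u + 1)
      linarith [Real.log_two_gt_d9]
    calc u ^ p * (Real.log (u + 1) + 1) ^ (p / 2)
        ≤ u ^ p * (4 * Real.log (u + 1)) ^ (p / 2) := by gcongr
      _ = 4 ^ (p / 2) * (u ^ p * Real.log (u + 1) ^ (p / 2)) := by
          rw [mul_rpow (by norm_num) hlog0]; ring
      _ ≤ 4 ^ (p / 2) * (1 + u ^ p * Real.log (u + 1) ^ (p / 2)) := by gcongr; linarith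

lemma tailScale_rpow_le {D p u : ℝ} (hD : 0 ≤ D) (hp : 0 ≤ p) (hu : 0 ≤ u) :
    tailScale D u ^ p ≤ (2 * D) ^ p * (1 + u ^ p * Real.log (u + 1) ^ (p / 2)) := by
  have hL : 0 ≤ Real.log (u + 1) + 1 := by linarith [Real.log_nonneg (by linarith : (1:ℝ) ≤ u + 1)]
  have h4 : (4:ℝ) ^ (p / 2) = 2 ^ p := by
    rw [show (4:ℝ) = 2 ^ (2:ℝ) by norm_num, ← Real.rpow_mul (by norm_num)]; ring_nf
  calc tailScale D u ^ p = D ^ p * (u ^ p * (Real.log (u + 1) + 1) ^ (p / 2)) := by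
        rw [tailScale, sqrt_eq_rpow, mul_rpow (by positivity) (by positivity),
          mul_rpow hD hu, ← Real.rpow_mul hL]
        ring_nf
    _ ≤ D ^ p * (4 ^ (p / 2) * (1 + u ^ p * Real.log (u + 1) ^ (p / 2))) := by
        exact mul_le_mul_of_nonneg_left (rpow_mul_log_add_one_add_one_rpow_le hp hu) (by positivity)
    _ = (2 * D) ^ p * (1 + u ^ p * Real.log (u + 1) ^ (p / 2)) := by
        rw [h4, mul_rpow (by norm_num) hD]; ring

lemma two_mul_exp_neg_tailScale_le {κ p D u : ℝ} (hp : 1 ≤ p) (hD : 0 < D)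
    (hκD : κ * D ^ 2 = 4 * p) (hu : 0 < u) :
    2 * Real.exp (-κ * tailScale D u ^ 2 / u ^ 2) ≤ min 1 ((D / tailScale D u) ^ (2 * p)) / 2 := by
  set t := tailScale D u
  have hu1 : 0 < u + 1 := by linarith
  have ht : 0 < t := tailScale_pos hD hu
  have hexp : Real.exp (-κ * t ^ 2 / u ^ 2) = Real.exp (-(4 * p)) * (u + 1) ^ (-(4 * p)) := by
    have hL : 0 ≤ Real.log (u + 1) + 1 := by
      linarith [Real.log_nonneg (by linarith : (1:ℝ) ≤ u + 1)]
    rw [rpow_def_of_pos hu1, ← Real.exp_add]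
    congr 1
    simp only [t, tailScale, mul_pow, sq_sqrt hL]
    field_simp
    linear_combination -(Real.log (u + 1) + 1) * hκD
  have hsmall : 2 * Real.exp (-(4 * p)) ≤ 1 / 2 := by
    have := Real.add_one_le_exp (4 * p)
    rw [Real.exp_neg, inv_eq_one_div, ← mul_div_assoc, div_le_div_iff₀ (by positivity) (by norm_num)]
    linarith
  have hpow : (u + 1) ^ (-(4 * p)) ≤ min 1 ((D / t) ^ (2 * p)) := by
    refine le_min (rpow_le_one_of_one_le_of_nonpos (by linarith) (by linarith)) ?_
    have hbase : (u + 1) ^ (-2:ℝ) ≤ D / t := by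
      rw [rpow_neg hu1.le, Real.rpow_two, le_div_iff₀ ht, inv_mul_le_iff₀ (by positivity), mul_comm]
      exact tailScale_le_mul_add_one_sq hD.le hu.le
    calc (u + 1) ^ (-(4 * p)) = ((u + 1) ^ (-2:ℝ)) ^ (2 * p) := by
          rw [← Real.rpow_mul hu1.le]; ring_nf
      _ ≤ (D / t) ^ (2 * p) := by gcongr
  rw [hexp]
  calc 2 * (Real.exp (-(4 * p)) * (u + 1) ^ (-(4 * p)))
      = 2 * Real.exp (-(4 * p)) * (u + 1) ^ (-(4 * p)) := by ring
    _ ≤ 1 / 2 * min 1 ((D / t) ^ (2 * p)) := by gcongr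
    _ = min 1 ((D / t) ^ (2 * p)) / 2 := by ring

lemma lintegral_min_one_div_rpow_mul_rpow_le {D p : ℝ} (hD : 0 < D) (hp : 0 < p) :
    ∫⁻ t in Ioi 0, ENNReal.ofReal (min 1 ((D / t) ^ (2 * p)) * t ^ (p - 1)) ≤
      ENNReal.ofReal (2 * D ^ p / p) := by
  have hnear : ∫⁻ t in Ioc 0 D, ENNReal.ofReal (min 1 ((D / t) ^ (2 * p)) * t ^ (p - 1)) ≤
      ENNReal.ofReal (D ^ p / p) := by
    have hint : IntegrableOn (fun t : ℝ => t ^ (p - 1)) (Ioc 0 D) := by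
      rw [← intervalIntegrable_iff_integrableOn_Ioc_of_le hD.le]
      exact intervalIntegral.intervalIntegrable_rpow' (by linarith)
    calc _ ≤ ∫⁻ t in Ioc 0 D, ENNReal.ofReal (t ^ (p - 1)) := by
          refine setLIntegral_mono' measurableSet_Ioc fun t ht => ENNReal.ofReal_le_ofReal ?_
          have := rpow_nonneg ht.1.le (p - 1)
          exact mul_le_of_le_one_left this (min_le_left _ _)
      _ = ENNReal.ofReal (∫ t in Ioc 0 D, t ^ (p - 1)) :=
          (ofReal_integral_eq_lintegral_ofReal hint
            ((ae_restrict_iff' measurableSet_Ioc).mpr (ae_of_all _ fun t ht =>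
              rpow_nonneg ht.1.le _))).symm
      _ = ENNReal.ofReal (D ^ p / p) := by
          rw [← intervalIntegral.integral_of_le hD.le, integral_rpow (by left; linarith),
            sub_add_cancel, zero_rpow hp.ne', sub_zero]
  have hfar : ∫⁻ t in Ioi D, ENNReal.ofReal (min 1 ((D / t) ^ (2 * p)) * t ^ (p - 1)) ≤
      ENNReal.ofReal (D ^ p / p) := by
    have hint : IntegrableOn (fun t : ℝ => D ^ (2 * p) * t ^ (-p - 1)) (Ioi D) :=
      (integrableOn_Ioi_rpow_of_lt (by linarith) hD).const_mul _
    calc _ ≤ ∫⁻ t in Ioi D, ENNReal.ofReal (D ^ (2 * p) * t ^ (-p - 1)) := by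
          refine setLIntegral_mono' measurableSet_Ioi fun t (ht : D < t) => ?_
          have ht0 : 0 < t := hD.trans ht
          refine ENNReal.ofReal_le_ofReal ((mul_le_mul_of_nonneg_right (min_le_right _ _)
            (rpow_nonneg ht0.le _)).trans_eq ?_)
          rw [div_rpow hD.le ht0.le, div_mul_eq_mul_div, mul_div_assoc, ← rpow_sub ht0]
          ring_nf
      _ = ENNReal.ofReal (∫ t in Ioi D, D ^ (2 * p) * t ^ (-p - 1)) :=
          (ofReal_integral_eq_lintegral_ofReal hint
            ((ae_restrict_iff' measurableSet_Ioi).mpr (ae_of_all _ fun t (ht : D < t) =>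
              mul_nonneg (by positivity) (rpow_nonneg (hD.trans ht).le _)))).symm
      _ = ENNReal.ofReal (D ^ p / p) := by
          rw [integral_const_mul, integral_Ioi_rpow_of_lt (by linarith) hD, sub_add_cancel]
          congr 1
          rw [neg_div_neg_eq, ← mul_div_assoc, ← rpow_add hD]
          ring_nf
  rw [← Ioc_union_Ioi_eq_Ioi hD.le, lintegral_union measurableSet_Ioi Ioc_disjoint_Ioi_same]
  calc _ ≤ ENNReal.ofReal (D ^ p / p) + ENNReal.ofReal (D ^ p / p) := add_le_add hnear hfar
    _ = ENNReal.ofReal (2 * D ^ p / p) := by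
        rw [← ENNReal.ofReal_add (by positivity) (by positivity)]; ring_nf

section

variable {Ω : Type*} [MeasurableSpace Ω] {P : Measure Ω} {κ : ℝ} {A B : Ω → ℝ}

def JointGaussianTail (P : Measure Ω) (κ : ℝ) (A B : Ω → ℝ) : Prop :=
  ∀ x > (0:ℝ), ∀ y > (0:ℝ),
    P {ω | x ≤ A ω ∧ B ω ≤ y} ≤ ENNReal.ofReal (2 * Real.exp (-κ * x ^ 2 / y ^ 2))

lemma JointGaussianTail.div_abs (h : JointGaussianTail P κ A B) {l : ℝ} (hl : 0 < l) :
    JointGaussianTail P κ (fun ω => A ω / l) (fun ω => |B ω| / l) := by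
  intro x hx y hy
  calc P {ω | x ≤ A ω / l ∧ |B ω| / l ≤ y} ≤ P {ω | x * l ≤ A ω ∧ B ω ≤ y * l} := by
        refine measure_mono fun ω ⟨hA, hB⟩ => ⟨(le_div_iff₀ hl).mp hA, ?_⟩
        exact (le_abs_self _).trans ((div_le_iff₀ hl).mp hB)
    _ ≤ ENNReal.ofReal (2 * Real.exp (-κ * (x * l) ^ 2 / (y * l) ^ 2)) :=
        h _ (by positivity) _ (by positivity)
    _ = ENNReal.ofReal (2 * Real.exp (-κ * x ^ 2 / y ^ 2)) := by
        congr 3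
        field_simp

lemma JointGaussianTail.measure_le_le_add {p D t : ℝ} (h : JointGaussianTail P κ A B) (hp : 1 ≤ p)
    (hD : 0 < D) (hκD : κ * D ^ 2 = 4 * p) (ht : 0 < t) :
    P {ω | t ≤ A ω} ≤
      ENNReal.ofReal (min 1 ((D / t) ^ (2 * p)) / 2) + P {ω | t ≤ tailScale D (B ω)} := by
  obtain ⟨u, hu, rfl⟩ := exists_tailScale_eq hD ht
  have hsplit : {ω | tailScale D u ≤ A ω} ⊆
      {ω | tailScale D u ≤ A ω ∧ B ω ≤ u} ∪ {ω | tailScale D u ≤ tailScale D (B ω)} := by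
    intro ω hω
    by_cases hBu : B ω ≤ u
    · exact Or.inl ⟨hω, hBu⟩
    · rw [not_le] at hBu
      exact Or.inr (tailScale_strictMonoOn hD hu.le (hu.trans hBu).le hBu).le
  calc P {ω | tailScale D u ≤ A ω}
      ≤ P {ω | tailScale D u ≤ A ω ∧ B ω ≤ u} + P {ω | tailScale D u ≤ tailScale D (B ω)} :=
        (measure_mono hsplit).trans (measure_union_le _ _)
    _ ≤ _ := by
        gcongr
        exact (h _ (tailScale_pos hD hu) _ hu).trans
          (ENNReal.ofReal_le_ofReal (two_mul_exp_neg_tailScale_le hp hD hκD hu))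

lemma lintegral_tailScale_rpow_le [IsProbabilityMeasure P] {D p : ℝ} (hD : 0 ≤ D) (hp : 0 ≤ p)
    (hBnn : ∀ ω, 0 ≤ B ω)
    (hN : ∫⁻ ω, ENNReal.ofReal (B ω ^ p * Real.log (B ω + 1) ^ (p / 2)) ∂P ≤ 1) :
    ∫⁻ ω, ENNReal.ofReal (tailScale D (B ω) ^ p) ∂P ≤ ENNReal.ofReal ((2 * D) ^ p) * 2 := by
  calc ∫⁻ ω, ENNReal.ofReal (tailScale D (B ω) ^ p) ∂P
      ≤ ∫⁻ ω, ENNReal.ofReal ((2 * D) ^ p) *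
          (1 + ENNReal.ofReal (B ω ^ p * Real.log (B ω + 1) ^ (p / 2))) ∂P := by
        refine lintegral_mono fun ω => ?_
        have hNω : 0 ≤ B ω ^ p * Real.log (B ω + 1) ^ (p / 2) := by
          have := Real.log_nonneg (by linarith [hBnn ω] : (1:ℝ) ≤ B ω + 1)
          have := hBnn ω
          positivity
        rw [← ENNReal.ofReal_one, ← ENNReal.ofReal_add zero_le_one hNω,
          ← ENNReal.ofReal_mul (by positivity)]
        exact ENNReal.ofReal_le_ofReal (tailScale_rpow_le hD hp (hBnn ω))
    _ = ENNReal.ofReal ((2 * D) ^ p) *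
          (1 + ∫⁻ ω, ENNReal.ofReal (B ω ^ p * Real.log (B ω + 1) ^ (p / 2)) ∂P) := by
        rw [lintegral_const_mul' _ _ ENNReal.ofReal_ne_top, lintegral_add_left measurable_const,
          lintegral_const, measure_univ, mul_one]
    _ ≤ ENNReal.ofReal ((2 * D) ^ p) * 2 := by
        gcongr
        calc _ ≤ (1 : ℝ≥0∞) + 1 := by gcongr
          _ = 2 := one_add_one_eq_two

lemma JointGaussianTail.lintegral_rpow_le [IsProbabilityMeasure P] {p : ℝ}
    (h : JointGaussianTail P κ A B) (hκ : 0 < κ) (hp : 1 ≤ p) (hA : Measurable A)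
    (hB : Measurable B) (hAnn : ∀ ω, 0 ≤ A ω) (hBnn : ∀ ω, 0 ≤ B ω)
    (hN : ∫⁻ ω, ENNReal.ofReal (B ω ^ p * Real.log (B ω + 1) ^ (p / 2)) ∂P ≤ 1) :
    ∫⁻ ω, ENNReal.ofReal (A ω ^ p) ∂P ≤ ENNReal.ofReal ((10 * √p / √κ) ^ p) := by
  have hp0 : 0 < p := by linarith
  set D := 2 * √p / √κ
  have hD : 0 < D := by positivity
  have hκD : κ * D ^ 2 = 4 * p := by
    simp only [D, div_pow, mul_pow, sq_sqrt hp0.le, sq_sqrt hκ.le]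
    field_simp
    norm_num
  let g : ℝ → ℝ≥0∞ := fun t => ENNReal.ofReal (min 1 ((D / t) ^ (2 * p)) / 2)
  have hg : Measurable fun t => g t * ENNReal.ofReal (t ^ (p - 1)) := by fun_prop
  have hgaussian : ENNReal.ofReal p * ∫⁻ t in Ioi 0, g t * ENNReal.ofReal (t ^ (p - 1)) ≤
      ENNReal.ofReal (D ^ p) := by
    calc ENNReal.ofReal p * ∫⁻ t in Ioi 0, g t * ENNReal.ofReal (t ^ (p - 1))
        = ENNReal.ofReal (p / 2) *
            ∫⁻ t in Ioi 0, ENNReal.ofReal (min 1 ((D / t) ^ (2 * p)) * t ^ (p - 1)) := by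
          rw [← lintegral_const_mul' _ _ ENNReal.ofReal_ne_top,
            ← lintegral_const_mul' _ _ ENNReal.ofReal_ne_top]
          refine setLIntegral_congr_fun measurableSet_Ioi fun t (ht : 0 < t) => ?_
          have hm : 0 ≤ min 1 ((D / t) ^ (2 * p)) := le_min zero_le_one (by positivity)
          rw [← mul_assoc, ← ENNReal.ofReal_mul hp0.le, ← ENNReal.ofReal_mul (by positivity),
            ← ENNReal.ofReal_mul (by positivity)]
          congr 1
          ring
      _ ≤ ENNReal.ofReal (p / 2) * ENNReal.ofReal (2 * D ^ p / p) :=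
          mul_le_mul_right (lintegral_min_one_div_rpow_mul_rpow_le hD hp0) _
      _ = ENNReal.ofReal (D ^ p) := by
          rw [← ENNReal.ofReal_mul (by positivity)]
          field_simp
  have hlayer := lintegral_rpow_eq_lintegral_meas_le_mul P (ae_of_all _ hAnn) hA.aemeasurable hp0
  have hlayer' := lintegral_rpow_eq_lintegral_meas_le_mul P
    (ae_of_all _ fun ω => tailScale_nonneg hD.le (hBnn ω))
    ((measurable_tailScale D).comp hB).aemeasurable hp0
  calc ∫⁻ ω, ENNReal.ofReal (A ω ^ p) ∂P
      = ENNReal.ofReal p * ∫⁻ t in Ioi 0, P {ω | t ≤ A ω} * ENNReal.ofReal (t ^ (p - 1)) :=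
        hlayer
    _ ≤ ENNReal.ofReal p * ∫⁻ t in Ioi 0,
          (g t + P {ω | t ≤ tailScale D (B ω)}) * ENNReal.ofReal (t ^ (p - 1)) := by
        refine mul_le_mul_right (setLIntegral_mono' measurableSet_Ioi fun t ht => ?_) _
        exact mul_le_mul_left (h.measure_le_le_add hp hD hκD ht) _
    _ = ENNReal.ofReal p * (∫⁻ t in Ioi 0, g t * ENNReal.ofReal (t ^ (p - 1))) +
          ∫⁻ ω, ENNReal.ofReal (tailScale D (B ω) ^ p) ∂P := by
        simp_rw [add_mul]
        rw [lintegral_add_left hg, mul_add, hlayer']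
    _ ≤ ENNReal.ofReal (D ^ p) + ENNReal.ofReal ((2 * D) ^ p) * 2 :=
        add_le_add hgaussian (lintegral_tailScale_rpow_le hD.le hp0.le hBnn hN)
    _ ≤ ENNReal.ofReal ((10 * √p / √κ) ^ p) := by
        have h5D : 10 * √p / √κ = D + 2 * D + 2 * D := by ring
        rw [mul_two, ← ENNReal.ofReal_add (by positivity) (by positivity),
          ← ENNReal.ofReal_add (by positivity) (by positivity), ← add_assoc, h5D]
        refine ENNReal.ofReal_le_ofReal ?_
        calc D ^ p + (2 * D) ^ p + (2 * D) ^ p ≤ (D + 2 * D) ^ p + (2 * D) ^ p := by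
              gcongr; exact add_rpow_le_rpow_add hD.le (by positivity) hp
          _ ≤ (D + 2 * D + 2 * D) ^ p := add_rpow_le_rpow_add (by positivity) (by positivity) hp

lemma eLpNorm_le_ofReal_of_lintegral_rpow_le {μ : Measure Ω} {f : Ω → ℝ} {p C : ℝ} (hp : 0 < p)
    (hf : ∀ ω, 0 ≤ f ω) (hC : 0 ≤ C)
    (h : ∫⁻ ω, ENNReal.ofReal (f ω ^ p) ∂μ ≤ ENNReal.ofReal (C ^ p)) :
    eLpNorm f (ENNReal.ofReal p) μ ≤ ENNReal.ofReal C := by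
  rw [eLpNorm_eq_lintegral_rpow_enorm_toReal (by simpa) ENNReal.ofReal_ne_top,
    ENNReal.toReal_ofReal hp.le]
  simp_rw [Real.enorm_eq_ofReal (hf _), ENNReal.ofReal_rpow_of_nonneg (hf _) hp.le]
  calc (∫⁻ ω, ENNReal.ofReal (f ω ^ p) ∂μ) ^ (1 / p) ≤ ENNReal.ofReal (C ^ p) ^ (1 / p) := by
        gcongr
    _ = ENNReal.ofReal C := by
        rw [← ENNReal.ofReal_rpow_of_nonneg hC hp.le, ← ENNReal.rpow_mul, mul_one_div_cancel hp.ne',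
          ENNReal.rpow_one]

end

theorem stmt3_general {Ω : Type*} [MeasurableSpace Ω] (P : Measure Ω) [IsProbabilityMeasure P]
    (κ : ℝ) (hκ : 0 < κ) (p : ℝ) (hp : 1 ≤ p)
    (A B : Ω → ℝ) (hA : Measurable A) (hB : Measurable B)
    (hAnn : ∀ ω, 0 ≤ A ω)
    (htail : ∀ x > (0:ℝ), ∀ y > (0:ℝ),
      P {ω | x ≤ A ω ∧ B ω ≤ y} ≤ ENNReal.ofReal (2 * Real.exp (-κ * x ^ 2 / y ^ 2))) :
    eLpNorm A (ENNReal.ofReal p) P ≤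
      ENNReal.ofReal (10 * Real.sqrt p / Real.sqrt κ) *
        luxNorm (fun t => t ^ p * (Real.log (t + 1)) ^ (p / 2)) P B := by
  have hC : 0 < 10 * √p / √κ := by positivity
  have hC' : ENNReal.ofReal (10 * √p / √κ) ≠ 0 := by simpa
  simp only [luxNorm, ENNReal.mul_iInf_of_ne hC' ENNReal.ofReal_ne_top]
  refine le_iInf₂ fun l ⟨hl, hN⟩ => ?_
  have hscaled := (JointGaussianTail.div_abs htail hl).lintegral_rpow_le hκ hp
    (hA.div_const l) (hB.abs.div_const l) (fun ω => div_nonneg (hAnn ω) hl.le)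
    (fun ω => by positivity) hN
  calc eLpNorm A (ENNReal.ofReal p) P = ‖l‖ₑ * eLpNorm (fun ω => A ω / l) (ENNReal.ofReal p) P := by
        rw [← eLpNorm_const_smul]
        congr 1
        ext ω
        simp [field]
    _ ≤ ENNReal.ofReal l * ENNReal.ofReal (10 * √p / √κ) := by
        rw [Real.enorm_eq_ofReal hl.le]
        gcongr
        exact eLpNorm_le_ofReal_of_lintegral_rpow_le (by linarith)
          (fun ω => div_nonneg (hAnn ω) hl.le) hC.le hscaled
    _ = ENNReal.ofReal (10 * √p / √κ) * ENNReal.ofReal l := mul_comm _ _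

/-- Tail-estimate lemma: if `ℙ(A ≥ x, B ≤ y) ≤ 2 exp(-κ x²/y²)` for all `x, y > 0`, then
`‖A‖_{L^p} ≤ 10 √p κ^{-1/2} ‖B‖_{L^N}` where `N(t) = t^p log^{p/2}(t+1)`. -/
theorem stmt3 {Ω : Type*} [MeasurableSpace Ω] (P : Measure Ω) [IsProbabilityMeasure P]
    (κ : ℝ) (hκ : 0 < κ) (p : ℝ) (hp : 1 ≤ p)
    (A B : Ω → ℝ) (hA : Measurable A) (hB : Measurable B)
    (hAnn : ∀ ω, 0 ≤ A ω) (hBnn : ∀ ω, 0 ≤ B ω)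
    (htail : ∀ x > (0:ℝ), ∀ y > (0:ℝ),
      P {ω | x ≤ A ω ∧ B ω ≤ y} ≤ ENNReal.ofReal (2 * Real.exp (-κ * x ^ 2 / y ^ 2))) :
    eLpNorm A (ENNReal.ofReal p) P ≤
      ENNReal.ofReal (10 * Real.sqrt p / Real.sqrt κ) *
        luxNorm (fun t => t ^ p * (Real.log (t + 1)) ^ (p / 2)) P B :=
  stmt3_general P κ hκ p hp A B hA hB hAnn htail
end

section
/- Let I be a nontrivial bounded interval in ℝ, α ∈ (0,1), q ∈ [1,∞], 𝒩 a Young function, and g : (0,1) → I an affine bijection. Then for every Bochner measurable f : I → X, min{|I|^{−1}, |I|^α} ‖f‖_{B^α_{𝒩,q}(I;X)} ≤ ‖f∘g‖_{B^α_{𝒩,q}(0,1;X)} ≤ max{|I|^{−1}, |I|^α} ‖f‖_{B^α_{𝒩,q}(I;X)}. -/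
open MeasureTheory ENNReal Filter Set

/-- The Orlicz modulus of continuity
`ω_{N,I}(f,t) = sup_{|h| ≤ t} ‖f(·+h) - f‖_{L^N(I(h);X)}`. -/
noncomputable def omegaOrlicz {X : Type*} [NormedAddCommGroup X]
    (N : ℝ → ℝ) (I : Set ℝ) (f : ℝ → X) (t : ℝ) : ℝ≥0∞ :=
  ⨆ (h : ℝ) (_ : |h| ≤ t),
    luxNorm N (volume.restrict {s | s ∈ I ∧ s + h ∈ I}) fun s => f (s + h) - f s

/-- The measure `dt/t` on `(0,∞)`. -/
noncomputable def mulHaar : Measure ℝ :=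
  (volume.restrict (Ioi (0:ℝ))).withDensity fun t => ENNReal.ofReal t⁻¹

/-- `L^q` norm (with `q ∈ [1,∞]`) of an `ℝ≥0∞`-valued function. -/
noncomputable def lqNormENN (q : ℝ≥0∞) (μ : Measure ℝ) (F : ℝ → ℝ≥0∞) : ℝ≥0∞ :=
  if q = ∞ then essSup F μ else (∫⁻ t, F t ^ q.toReal ∂μ) ^ (1 / q.toReal)

/-- The Besov–Orlicz norm
`‖f‖_{B^α_{N,q}(I;X)} = ‖f‖_{L^N(I;X)} + ‖t^{-α} ω_{N,I}(f,t)‖_{L^q((0,∞),dt/t)}`. -/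
noncomputable def besovOrliczNorm {X : Type*} [NormedAddCommGroup X]
    (N : ℝ → ℝ) (q : ℝ≥0∞) (α : ℝ) (I : Set ℝ) (f : ℝ → X) : ℝ≥0∞ :=
  luxNorm N (volume.restrict I) f +
    lqNormENN q mulHaar fun t => ENNReal.ofReal (t ^ (-α)) * omegaOrlicz N I f t

/-! The affine substitution `x = c + d s`, with `|d| = |I|`, pushes Lebesgue measure forward to
`|I|⁻¹` times Lebesgue measure and turns a shift by `h` into a shift by `d h`. For convex `N` with
`N 0 = 0`, multiplying the measure by `k > 0` changes the Luxemburg norm by a factor between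
`min 1 k` and `max 1 k`; this controls both the `L^N` part and the modulus of continuity,
`ω_{(0,1)}(f ∘ g, t) ≈ ω_I(f, |I| t)`. Since `dt/t` is dilation invariant, the substitution
`t ↦ |I| t` in the `L^q` part produces the factor `|I|^α`. -/

theorem ConvexOn.map_smul_le_of_map_zero {E : Type*} [AddCommGroup E] [Module ℝ E] {s : Set E}
    {f : E → ℝ} (hf : ConvexOn ℝ s f) (h0 : (0 : E) ∈ s) (hf0 : f 0 = 0) {x : E} (hx : x ∈ s)
    {m : ℝ} (hm0 : 0 ≤ m) (hm1 : m ≤ 1) : f (m • x) ≤ m * f x := by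
  simpa [hf0] using hf.2 hx h0 hm0 (sub_nonneg.2 hm1) (add_sub_cancel m 1)

section Luxemburg

variable {U X : Type*} [MeasurableSpace U] [NormedAddCommGroup X]

theorem luxNorm_map {V : Type*} [MeasurableSpace V] (N : ℝ → ℝ) {g : U → V}
    (hg : MeasurableEmbedding g) (μ : Measure U) (F : V → X) :
    luxNorm N (μ.map g) F = luxNorm N μ (F ∘ g) := by
  simp only [luxNorm, hg.lintegral_map]
  rfl

theorem luxNorm_smul_measure_ge {N : ℝ → ℝ} (hN0 : N 0 = 0) (hconv : ConvexOn ℝ (Ici 0) N)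
    (μ : Measure U) (f : U → X) {c : ℝ} (hc : 0 < c) :
    ENNReal.ofReal (min 1 c) * luxNorm N μ f ≤ luxNorm N (ENNReal.ofReal c • μ) f := by
  set m := min 1 c
  have hm : 0 < m := lt_min one_pos hc
  refine le_iInf₂ fun l hl => ?_
  obtain ⟨hl, hint⟩ := hl
  rw [lintegral_smul_measure] at hint
  have hN : ∀ u, N (‖f u‖ / (l / m)) ≤ m * N (‖f u‖ / l) := fun u => by
    rw [div_div_eq_mul_div, mul_comm, mul_div_assoc]
    simpa only [smul_eq_mul] using hconv.map_smul_le_of_map_zero self_mem_Ici hN0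
      (div_nonneg (norm_nonneg _) hl.le) hm.le (min_le_left _ _)
  have hfeas : ∫⁻ u, ENNReal.ofReal (N (‖f u‖ / (l / m))) ∂μ ≤ 1 :=
    calc ∫⁻ u, ENNReal.ofReal (N (‖f u‖ / (l / m))) ∂μ
        ≤ ∫⁻ u, ENNReal.ofReal m * ENNReal.ofReal (N (‖f u‖ / l)) ∂μ :=
          lintegral_mono fun u =>
            (ENNReal.ofReal_mul hm.le).symm ▸ ENNReal.ofReal_le_ofReal (hN u)
      _ = ENNReal.ofReal m * ∫⁻ u, ENNReal.ofReal (N (‖f u‖ / l)) ∂μ :=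
          lintegral_const_mul' _ _ ofReal_ne_top
      _ ≤ ENNReal.ofReal c * ∫⁻ u, ENNReal.ofReal (N (‖f u‖ / l)) ∂μ := by
          gcongr
          exact min_le_right _ _
      _ ≤ 1 := hint
  calc ENNReal.ofReal m * luxNorm N μ f ≤ ENNReal.ofReal m * ENNReal.ofReal (l / m) := by
        gcongr
        exact iInf₂_le (l / m) ⟨div_pos hl hm, hfeas⟩
    _ = ENNReal.ofReal l := by rw [← ENNReal.ofReal_mul hm.le, mul_div_cancel₀ _ hm.ne']

theorem luxNorm_smul_measure_le {N : ℝ → ℝ} (hN0 : N 0 = 0) (hconv : ConvexOn ℝ (Ici 0) N)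
    (μ : Measure U) (f : U → X) {c : ℝ} (hc : 0 < c) :
    luxNorm N (ENNReal.ofReal c • μ) f ≤ ENNReal.ofReal (max 1 c) * luxNorm N μ f := by
  have hm : 0 < min 1 c⁻¹ := lt_min one_pos (inv_pos.2 hc)
  have h := luxNorm_smul_measure_ge hN0 hconv (ENNReal.ofReal c • μ) f (inv_pos.2 hc)
  rw [smul_smul, ← ENNReal.ofReal_mul (inv_pos.2 hc).le, inv_mul_cancel₀ hc.ne', ofReal_one,
    one_smul] at h
  have hmax : max 1 c = (min 1 c⁻¹)⁻¹ := by
    rcases le_total c 1 with hc1 | hc1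
    · rw [max_eq_left hc1, min_eq_left (one_le_inv_iff₀.2 ⟨hc, hc1⟩), inv_one]
    · rw [max_eq_right hc1, min_eq_right (inv_le_one_of_one_le₀ hc1), inv_inv]
  rw [hmax, ofReal_inv_of_pos hm, ← ENNReal.div_eq_inv_mul,
    ENNReal.le_div_iff_mul_le (.inl (by simpa using hm)) (.inl ofReal_ne_top), mul_comm]
  exact h

end Luxemburg

section Affine

variable {X : Type*} [NormedAddCommGroup X] {c d : ℝ}

theorem measurableEmbedding_affine (hd : d ≠ 0) : MeasurableEmbedding fun x : ℝ => c + d * x :=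
  (measurableEmbedding_addLeft c).comp (measurableEmbedding_mulLeft₀ hd)

theorem map_volume_affine (hd : d ≠ 0) :
    Measure.map (fun x : ℝ => c + d * x) volume = ENNReal.ofReal |d|⁻¹ • volume := by
  have hcomp : (fun x : ℝ => c + d * x) = (fun x => c + x) ∘ (fun x => d * x) := rfl
  rw [hcomp, ← Measure.map_map (measurable_const_add c) (measurable_const_mul d),
    Real.map_volume_mul_left hd, Measure.map_smul, map_add_left_eq_self volume c, abs_inv]

theorem luxNorm_comp_affine (N : ℝ → ℝ) (hd : d ≠ 0) (T : Set ℝ) (F : ℝ → X) :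
    luxNorm N (volume.restrict ((fun x => c + d * x) ⁻¹' T)) (F ∘ fun x => c + d * x) =
      luxNorm N (ENNReal.ofReal |d|⁻¹ • volume.restrict T) F := by
  rw [← luxNorm_map N (measurableEmbedding_affine hd),
    ← (measurableEmbedding_affine hd).restrict_map, map_volume_affine hd, Measure.restrict_smul]

theorem luxNorm_shift_comp_affine (N : ℝ → ℝ) (hd : d ≠ 0) (I : Set ℝ) (f : ℝ → X) (h : ℝ) :
    luxNorm N (volume.restrict
        {s | s ∈ (fun x => c + d * x) ⁻¹' I ∧ s + h ∈ (fun x => c + d * x) ⁻¹' I})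
        (fun s => (f ∘ fun x => c + d * x) (s + h) - (f ∘ fun x => c + d * x) s) =
      luxNorm N (ENNReal.ofReal |d|⁻¹ • volume.restrict {u | u ∈ I ∧ u + d * h ∈ I})
        fun u => f (u + d * h) - f u := by
  have hshift : ∀ s, c + d * (s + h) = c + d * s + d * h := fun s => by ring
  rw [← luxNorm_comp_affine (c := c) N hd]
  simp only [Function.comp_def, preimage_ofPred_eq, mem_preimage, hshift]

theorem omegaOrlicz_comp_affine_ge {N : ℝ → ℝ} (hN0 : N 0 = 0) (hconv : ConvexOn ℝ (Ici 0) N)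
    (hd : d ≠ 0) (I : Set ℝ) (f : ℝ → X) (t : ℝ) :
    ENNReal.ofReal (min 1 |d|⁻¹) * omegaOrlicz N I f (|d| * t) ≤
      omegaOrlicz N ((fun x => c + d * x) ⁻¹' I) (f ∘ fun x => c + d * x) t := by
  simp only [omegaOrlicz, ENNReal.mul_iSup]
  refine iSup₂_le fun h hh => le_iSup₂_of_le (h / d) ?_ ?_
  · rw [abs_div, div_le_iff₀ (abs_pos.2 hd)]
    linarith [mul_comm |d| t]
  · rw [luxNorm_shift_comp_affine N hd, mul_div_cancel₀ h hd]
    exact luxNorm_smul_measure_ge hN0 hconv _ _ (inv_pos.2 (abs_pos.2 hd))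

theorem omegaOrlicz_comp_affine_le {N : ℝ → ℝ} (hN0 : N 0 = 0) (hconv : ConvexOn ℝ (Ici 0) N)
    (hd : d ≠ 0) (I : Set ℝ) (f : ℝ → X) (t : ℝ) :
    omegaOrlicz N ((fun x => c + d * x) ⁻¹' I) (f ∘ fun x => c + d * x) t ≤
      ENNReal.ofReal (max 1 |d|⁻¹) * omegaOrlicz N I f (|d| * t) := by
  simp only [omegaOrlicz, ENNReal.mul_iSup]
  refine iSup₂_le fun h hh => le_iSup₂_of_le (d * h) ?_ ?_
  · rw [abs_mul]
    exact mul_le_mul_of_nonneg_left hh (abs_nonneg d)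
  · rw [luxNorm_shift_comp_affine N hd]
    exact luxNorm_smul_measure_le hN0 hconv _ _ (inv_pos.2 (abs_pos.2 hd))

end Affine

section LqNorm

variable {q : ℝ≥0∞} {μ : Measure ℝ}

theorem lqNormENN_mono {F G : ℝ → ℝ≥0∞} (h : F ≤ᵐ[μ] G) :
    lqNormENN q μ F ≤ lqNormENN q μ G := by
  unfold lqNormENN
  split
  · exact essSup_mono_ae h
  · gcongr ?_ ^ _
    exact lintegral_mono_ae (h.mono fun x hx => by gcongr)

theorem lqNormENN_congr_ae {F G : ℝ → ℝ≥0∞} (h : F =ᵐ[μ] G) :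
    lqNormENN q μ F = lqNormENN q μ G :=
  le_antisymm (lqNormENN_mono h.le) (lqNormENN_mono h.symm.le)

theorem lqNormENN_const_mul (hq : q ≠ 0) {c : ℝ≥0∞} (hc : c ≠ ∞) (F : ℝ → ℝ≥0∞) :
    lqNormENN q μ (fun t => c * F t) = c * lqNormENN q μ F := by
  unfold lqNormENN
  split_ifs with hq'
  · exact ENNReal.essSup_const_mul
  · have hp : q.toReal ≠ 0 := ENNReal.toReal_ne_zero.2 ⟨hq, hq'⟩
    simp_rw [ENNReal.mul_rpow_of_nonneg _ _ ENNReal.toReal_nonneg]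
    rw [lintegral_const_mul' _ _ (ENNReal.rpow_ne_top_of_nonneg ENNReal.toReal_nonneg hc),
      ENNReal.mul_rpow_of_nonneg _ _ (by positivity), ← ENNReal.rpow_mul,
      mul_one_div_cancel hp, ENNReal.rpow_one]

theorem lqNormENN_map {m : ℝ → ℝ} (hm : MeasurableEmbedding m) (F : ℝ → ℝ≥0∞) :
    lqNormENN q (μ.map m) F = lqNormENN q μ (F ∘ m) := by
  unfold lqNormENN
  split
  · exact hm.essSup_map_measure
  · rw [hm.lintegral_map]
    rfl

end LqNorm

theorem ae_mulHaar_pos : ∀ᵐ t ∂mulHaar, 0 < t :=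
  (withDensity_absolutelyContinuous _ _).ae_le (ae_restrict_mem measurableSet_Ioi)

theorem map_mul_left_mulHaar {k : ℝ} (hk : 0 < k) : mulHaar.map (k * ·) = mulHaar := by
  ext s hs
  have hmeas : MeasurableSet ((k * ·) ⁻¹' s) := measurable_const_mul k hs
  have hpre : (k * ·) ⁻¹' (s ∩ Ioi 0) = (k * ·) ⁻¹' s ∩ Ioi 0 := by
    ext t
    simp [mul_pos_iff_of_pos_left hk]
  have hdens : ∀ t : ℝ, ENNReal.ofReal t⁻¹ = ENNReal.ofReal k * ENNReal.ofReal (k * t)⁻¹ := by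
    intro t
    rw [← ENNReal.ofReal_mul hk.le, mul_inv, ← mul_assoc, mul_inv_cancel₀ hk.ne', one_mul]
  rw [Measure.map_apply (measurable_const_mul k) hs, mulHaar, withDensity_apply _ hs,
    withDensity_apply _ hmeas, Measure.restrict_restrict hs, Measure.restrict_restrict hmeas,
    ← hpre]
  calc ∫⁻ t in (k * ·) ⁻¹' (s ∩ Ioi 0), ENNReal.ofReal t⁻¹
      = ENNReal.ofReal k * ∫⁻ t in (k * ·) ⁻¹' (s ∩ Ioi 0), ENNReal.ofReal (k * t)⁻¹ := by
        rw [← lintegral_const_mul' _ _ ofReal_ne_top]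
        simp only [← hdens]
    _ = ENNReal.ofReal k * ∫⁻ u in s ∩ Ioi 0, ENNReal.ofReal u⁻¹ ∂(volume.map (k * ·)) := by
        rw [setLIntegral_map (hs.inter measurableSet_Ioi) (by fun_prop) (measurable_const_mul k)]
    _ = ∫⁻ u in s ∩ Ioi 0, ENNReal.ofReal u⁻¹ := by
        rw [Real.map_volume_mul_left hk.ne', Measure.restrict_smul, lintegral_smul_measure,
          smul_eq_mul, ← mul_assoc, ← ENNReal.ofReal_mul hk.le, abs_inv, abs_of_pos hk,
          mul_inv_cancel₀ hk.ne', ofReal_one, one_mul]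

theorem lqNormENN_mulHaar_rpow_comp_mul {q : ℝ≥0∞} (hq : q ≠ 0) (α : ℝ) {k : ℝ} (hk : 0 < k)
    (Ω : ℝ → ℝ≥0∞) :
    lqNormENN q mulHaar (fun t => ENNReal.ofReal (t ^ (-α)) * Ω (k * t)) =
      ENNReal.ofReal (k ^ α) * lqNormENN q mulHaar fun t => ENNReal.ofReal (t ^ (-α)) * Ω t := by
  set W : ℝ → ℝ≥0∞ := fun t => ENNReal.ofReal (t ^ (-α)) * Ω t
  have hW : (fun t => ENNReal.ofReal (t ^ (-α)) * Ω (k * t)) =ᵐ[mulHaar]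
      fun t => ENNReal.ofReal (k ^ α) * (W ∘ (k * ·)) t := by
    filter_upwards [ae_mulHaar_pos] with t ht
    rw [Function.comp_apply, ← mul_assoc, ← ENNReal.ofReal_mul (Real.rpow_nonneg hk.le _),
      Real.mul_rpow hk.le ht.le, ← mul_assoc, ← Real.rpow_add hk, add_neg_cancel,
      Real.rpow_zero, one_mul]
  rw [lqNormENN_congr_ae hW, lqNormENN_const_mul hq ofReal_ne_top,
    ← lqNormENN_map (measurableEmbedding_mulLeft₀ hk.ne'), map_mul_left_mulHaar hk]

section Besov

variable {X : Type*} [NormedAddCommGroup X] {N : ℝ → ℝ} {q : ℝ≥0∞} {c d : ℝ}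

theorem besovOrliczNorm_comp_affine_ge (hN0 : N 0 = 0) (hconv : ConvexOn ℝ (Ici 0) N)
    (hq : q ≠ 0) (α : ℝ) (hd : d ≠ 0) (I : Set ℝ) (f : ℝ → X) :
    ENNReal.ofReal (min 1 |d|⁻¹ * min 1 (|d| ^ α)) * besovOrliczNorm N q α I f ≤
      besovOrliczNorm N q α ((fun x => c + d * x) ⁻¹' I) (f ∘ fun x => c + d * x) := by
  have hk : 0 < |d| := abs_pos.2 hd
  have hm : 0 ≤ min 1 |d|⁻¹ := (lt_min one_pos (inv_pos.2 hk)).le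
  rw [besovOrliczNorm, besovOrliczNorm, mul_add]
  gcongr ?_ + ?_
  · calc ENNReal.ofReal (min 1 |d|⁻¹ * min 1 (|d| ^ α)) * luxNorm N (volume.restrict I) f
        ≤ ENNReal.ofReal (min 1 |d|⁻¹) * luxNorm N (volume.restrict I) f := by
          gcongr
          exact mul_le_of_le_one_right hm (min_le_left _ _)
      _ ≤ _ := by
          rw [luxNorm_comp_affine N hd]
          exact luxNorm_smul_measure_ge hN0 hconv _ _ (inv_pos.2 hk)
  · calc ENNReal.ofReal (min 1 |d|⁻¹ * min 1 (|d| ^ α)) *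
          lqNormENN q mulHaar (fun t => ENNReal.ofReal (t ^ (-α)) * omegaOrlicz N I f t)
        ≤ ENNReal.ofReal (min 1 |d|⁻¹) * (ENNReal.ofReal (|d| ^ α) *
          lqNormENN q mulHaar (fun t => ENNReal.ofReal (t ^ (-α)) * omegaOrlicz N I f t)) := by
          rw [← mul_assoc, ← ENNReal.ofReal_mul hm]
          gcongr
          exact min_le_right _ _
      _ = lqNormENN q mulHaar (fun t => ENNReal.ofReal (min 1 |d|⁻¹) *
            (ENNReal.ofReal (t ^ (-α)) * omegaOrlicz N I f (|d| * t))) := by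
          rw [← lqNormENN_mulHaar_rpow_comp_mul hq α hk, lqNormENN_const_mul hq ofReal_ne_top]
      _ ≤ _ := lqNormENN_mono <| ae_of_all _ fun t => by
          dsimp only
          rw [mul_left_comm]
          gcongr
          exact omegaOrlicz_comp_affine_ge hN0 hconv hd I f t

theorem besovOrliczNorm_comp_affine_le (hN0 : N 0 = 0) (hconv : ConvexOn ℝ (Ici 0) N)
    (hq : q ≠ 0) (α : ℝ) (hd : d ≠ 0) (I : Set ℝ) (f : ℝ → X) :
    besovOrliczNorm N q α ((fun x => c + d * x) ⁻¹' I) (f ∘ fun x => c + d * x) ≤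
      ENNReal.ofReal (max 1 |d|⁻¹ * max 1 (|d| ^ α)) * besovOrliczNorm N q α I f := by
  have hk : 0 < |d| := abs_pos.2 hd
  have hm : 0 ≤ max 1 |d|⁻¹ := zero_le_one.trans (le_max_left _ _)
  rw [besovOrliczNorm, besovOrliczNorm, mul_add]
  gcongr ?_ + ?_
  · calc _ ≤ ENNReal.ofReal (max 1 |d|⁻¹) * luxNorm N (volume.restrict I) f := by
          rw [luxNorm_comp_affine N hd]
          exact luxNorm_smul_measure_le hN0 hconv _ _ (inv_pos.2 hk)
      _ ≤ ENNReal.ofReal (max 1 |d|⁻¹ * max 1 (|d| ^ α)) * luxNorm N (volume.restrict I) f := by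
          gcongr
          exact le_mul_of_one_le_right hm (le_max_left _ _)
  · calc _ ≤ lqNormENN q mulHaar (fun t => ENNReal.ofReal (max 1 |d|⁻¹) *
            (ENNReal.ofReal (t ^ (-α)) * omegaOrlicz N I f (|d| * t))) :=
          lqNormENN_mono <| ae_of_all _ fun t => by
            dsimp only
            rw [mul_left_comm]
            gcongr
            exact omegaOrlicz_comp_affine_le hN0 hconv hd I f t
      _ = ENNReal.ofReal (max 1 |d|⁻¹) * (ENNReal.ofReal (|d| ^ α) *
          lqNormENN q mulHaar (fun t => ENNReal.ofReal (t ^ (-α)) * omegaOrlicz N I f t)) := by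
          rw [← lqNormENN_mulHaar_rpow_comp_mul hq α hk, lqNormENN_const_mul hq ofReal_ne_top]
      _ ≤ ENNReal.ofReal (max 1 |d|⁻¹ * max 1 (|d| ^ α)) *
          lqNormENN q mulHaar (fun t => ENNReal.ofReal (t ^ (-α)) * omegaOrlicz N I f t) := by
          rw [← mul_assoc, ← ENNReal.ofReal_mul hm]
          gcongr
          exact le_max_right _ _

end Besov

theorem min_inv_rpow_eq_mul {k α : ℝ} (hk : 0 < k) (hα : 0 ≤ α) :
    min k⁻¹ (k ^ α) = min 1 k⁻¹ * min 1 (k ^ α) := by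
  rcases le_total k 1 with h | h
  · have hα1 : k ^ α ≤ 1 := Real.rpow_le_one hk.le h hα
    rw [min_eq_left (one_le_inv_iff₀.2 ⟨hk, h⟩), min_eq_right hα1, one_mul,
      min_eq_right (hα1.trans (one_le_inv_iff₀.2 ⟨hk, h⟩))]
  · have hα1 : 1 ≤ k ^ α := Real.one_le_rpow h hα
    rw [min_eq_right (inv_le_one_of_one_le₀ h), min_eq_left hα1, mul_one,
      min_eq_left ((inv_le_one_of_one_le₀ h).trans hα1)]

theorem max_inv_rpow_eq_mul {k α : ℝ} (hk : 0 < k) (hα : 0 ≤ α) :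
    max k⁻¹ (k ^ α) = max 1 k⁻¹ * max 1 (k ^ α) := by
  rcases le_total k 1 with h | h
  · have hα1 : k ^ α ≤ 1 := Real.rpow_le_one hk.le h hα
    rw [max_eq_right (one_le_inv_iff₀.2 ⟨hk, h⟩), max_eq_left hα1, mul_one,
      max_eq_left (hα1.trans (one_le_inv_iff₀.2 ⟨hk, h⟩))]
  · have hα1 : 1 ≤ k ^ α := Real.one_le_rpow h hα
    rw [max_eq_left (inv_le_one_of_one_le₀ h), max_eq_right hα1, one_mul,
      max_eq_right ((inv_le_one_of_one_le₀ h).trans hα1)]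

theorem ne_zero_of_injOn_affine {c d : ℝ} (h : InjOn (fun x => c + d * x) (Ioo 0 1)) : d ≠ 0 := by
  rintro rfl
  have := h (show (1 / 4 : ℝ) ∈ Ioo 0 1 by norm_num) (show (1 / 2 : ℝ) ∈ Ioo 0 1 by norm_num)
    (by simp)
  norm_num at this

theorem abs_eq_of_preimage_affine_Ioo {a b c d : ℝ} (hd : d ≠ 0)
    (h : (fun x => c + d * x) ⁻¹' Ioo a b = Ioo 0 1) : |d| = b - a := by
  have hvol := Measure.map_apply (measurableEmbedding_affine (c := c) hd).measurable
    (μ := volume) (measurableSet_Ioo (a := a) (b := b))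
  rw [map_volume_affine hd, h, Measure.smul_apply, Real.volume_Ioo,
    Real.volume_Ioo, smul_eq_mul, ← ENNReal.ofReal_mul (inv_nonneg.2 (abs_nonneg d)),
    sub_zero, ofReal_one, ENNReal.ofReal_eq_one] at hvol
  exact (inv_mul_eq_one₀ (abs_ne_zero.2 hd)).1 hvol

theorem stmt10_general {X : Type*} [NormedAddCommGroup X]
    (a b : ℝ) (α : ℝ) (hα : 0 < α)
    (q : ℝ≥0∞) (hq : 1 ≤ q) (N : ℝ → ℝ)
    (hN0 : N 0 = 0) (hconv : ConvexOn ℝ (Ici 0) N)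
    (g : ℝ → ℝ) (c d : ℝ) (hgdef : ∀ x, g x = c + d * x)
    (hgbij : Set.BijOn g (Ioo (0:ℝ) 1) (Ioo a b))
    (f : ℝ → X) :
    ENNReal.ofReal (min (b - a)⁻¹ ((b - a) ^ α)) * besovOrliczNorm N q α (Ioo a b) f ≤
      besovOrliczNorm N q α (Ioo 0 1) (f ∘ g) ∧
    besovOrliczNorm N q α (Ioo 0 1) (f ∘ g) ≤
      ENNReal.ofReal (max (b - a)⁻¹ ((b - a) ^ α)) * besovOrliczNorm N q α (Ioo a b) f := by
  obtain rfl : g = fun x => c + d * x := funext hgdef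
  have hd : d ≠ 0 := ne_zero_of_injOn_affine hgbij.injOn
  have hpre : (fun x => c + d * x) ⁻¹' Ioo a b = Ioo 0 1 := by
    rw [← hgbij.image_eq, (measurableEmbedding_affine hd).injective.preimage_image]
  have hq0 : q ≠ 0 := (zero_lt_one.trans_le hq).ne'
  rw [← hpre, ← abs_eq_of_preimage_affine_Ioo hd hpre, min_inv_rpow_eq_mul (abs_pos.2 hd) hα.le,
    max_inv_rpow_eq_mul (abs_pos.2 hd) hα.le]
  exact ⟨besovOrliczNorm_comp_affine_ge hN0 hconv hq0 α hd _ f,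
    besovOrliczNorm_comp_affine_le hN0 hconv hq0 α hd _ f⟩

/-- Scaling of the Besov–Orlicz norm under an affine bijection `g : (0,1) → I`:
`min{|I|⁻¹, |I|^α} ‖f‖_{B^α_{N,q}(I;X)} ≤ ‖f ∘ g‖_{B^α_{N,q}(0,1;X)}
  ≤ max{|I|⁻¹, |I|^α} ‖f‖_{B^α_{N,q}(I;X)}`. -/
theorem stmt10 {X : Type*} [NormedAddCommGroup X]
    (a b : ℝ) (hab : a < b) (α : ℝ) (hα : 0 < α) (hα1 : α < 1)
    (q : ℝ≥0∞) (hq : 1 ≤ q) (N : ℝ → ℝ)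
    (hN0 : N 0 = 0) (hmono : MonotoneOn N (Ici 0)) (hconv : ConvexOn ℝ (Ici 0) N)
    (hnonneg : ∀ x ∈ Ici (0:ℝ), 0 ≤ N x) (htop : Tendsto N atTop atTop)
    (g : ℝ → ℝ) (c d : ℝ) (hgdef : ∀ x, g x = c + d * x)
    (hgbij : Set.BijOn g (Ioo (0:ℝ) 1) (Ioo a b))
    (f : ℝ → X) (hf : AEStronglyMeasurable f volume) :
    ENNReal.ofReal (min (b - a)⁻¹ ((b - a) ^ α)) * besovOrliczNorm N q α (Ioo a b) f ≤
      besovOrliczNorm N q α (Ioo 0 1) (f ∘ g) ∧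
    besovOrliczNorm N q α (Ioo 0 1) (f ∘ g) ≤
      ENNReal.ofReal (max (b - a)⁻¹ ((b - a) ^ α)) * besovOrliczNorm N q α (Ioo a b) f :=
  stmt10_general a b α hα q hq N hN0 hconv g c d hgdef hgbij f
end

section
/- Extension by zero: Let X be a Banach space, p ∈ (1,∞], α ∈ (0,1) with αp > 1. Then there is a constant C such that ‖f‖_{B^α_{p,∞}(ℝ;X)} ≤ C ‖f‖_{B^α_{p,∞}((0,∞);X)} for every continuous f : ℝ → X with f = 0 on (−∞, 0]. -/
/-!
Doubling the interval `(0, m)` to `(0, 2m)` multiplies `‖f‖_{L^p(0,m)}` by at most `2^{1/p}`, up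
to the error `ω(m) ≲ m^α [f]`, where `[f]` is the Besov seminorm on `(0, ∞)`. Iterating over the
dyadic scales `r 2^{-k}` gives `‖f‖_{L^p(0,r)} ≲ r^α [f]`, since the ratio `2^{1/p - α}` is `< 1`
exactly when `αp > 1`; the remainder `2^{n/p} ‖f‖_{L^p(0, r 2^{-n})}` is at most
`r^{1/p} sup_{(0, r 2^{-n}]} ‖f‖`, which tends to `0` because `f` is continuous with `f 0 = 0`.

For a shift `h ≥ 0`, `f(· + h) - f` equals `f(· + h)` on `(-∞, 0]`, whose norm is
`‖f‖_{L^p(0,h)} ≲ h^α [f]`, and is a difference inside `(0, ∞)` elsewhere. Negative shifts reduce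
to positive ones by translating by `h`.
-/

open MeasureTheory ENNReal Filter Set

/-- The `L^p` modulus of continuity. -/
noncomputable def omegaLp {X : Type*} [NormedAddCommGroup X]
    (p : ℝ≥0∞) (I : Set ℝ) (f : ℝ → X) (t : ℝ) : ℝ≥0∞ :=
  ⨆ (h : ℝ) (_ : |h| ≤ t),
    eLpNorm (fun s => f (s + h) - f s) p (volume.restrict {s | s ∈ I ∧ s + h ∈ I})

/-- The `B^α_{p,∞}` norm on `I`: `‖f‖_{L^p(I;X)} + sup_{t>0} t^{-α} ω_{p,I}(f,t)`. -/
noncomputable def besovInftyNorm {X : Type*} [NormedAddCommGroup X]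
    (p : ℝ≥0∞) (α : ℝ) (I : Set ℝ) (f : ℝ → X) : ℝ≥0∞ :=
  eLpNorm f p (volume.restrict I) +
    ⨆ (t : ℝ) (_ : 0 < t), ENNReal.ofReal (t ^ (-α)) * omegaLp p I f t

open Topology

-- For `p = ∞` the factor is `2 ^ 0 = 1`, since `(∞ : ℝ≥0∞).toReal = 0`.
theorem MeasureTheory.eLpNorm_add_measure_le {α ε : Type*} {m : MeasurableSpace α} [ENorm ε]
    (f : α → ε) (p : ℝ≥0∞) (μ ν : Measure α) :
    eLpNorm f p (μ + ν) ≤ 2 ^ p.toReal⁻¹ * max (eLpNorm f p μ) (eLpNorm f p ν) := by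
  rcases eq_or_ne p 0 with rfl | hp0
  · simp
  rcases eq_or_ne p ∞ with rfl | hptop
  · simp only [eLpNorm_exponent_top, toReal_top, _root_.inv_zero, rpow_zero, one_mul]
    refine eLpNormEssSup_le_of_ae_enorm_bound (ae_add_measure_iff.2 ⟨?_, ?_⟩)
    · exact ae_le_eLpNormEssSup.mono fun x hx => hx.trans (le_max_left _ _)
    · exact ae_le_eLpNormEssSup.mono fun x hx => hx.trans (le_max_right _ _)
  have hq : 0 < p.toReal := toReal_pos hp0 hptop
  simp only [eLpNorm_eq_eLpNorm' hp0 hptop]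
  set M := max (eLpNorm' f p.toReal μ) (eLpNorm' f p.toReal ν)
  calc eLpNorm' f p.toReal (μ + ν)
      = (eLpNorm' f p.toReal μ ^ p.toReal + eLpNorm' f p.toReal ν ^ p.toReal) ^ p.toReal⁻¹ := by
        rw [eLpNorm'_eq_lintegral_enorm, lintegral_add_measure,
          lintegral_rpow_enorm_eq_rpow_eLpNorm' hq, lintegral_rpow_enorm_eq_rpow_eLpNorm' hq,
          one_div]
    _ ≤ (2 * M ^ p.toReal) ^ p.toReal⁻¹ := by
        rw [two_mul]
        gcongr
        exacts [le_max_left _ _, le_max_right _ _]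
    _ = 2 ^ p.toReal⁻¹ * M := by
        rw [mul_rpow_of_nonneg _ _ (inv_nonneg.2 hq.le), ← rpow_mul, mul_inv_cancel₀ hq.ne',
          rpow_one]

theorem MeasureTheory.eLpNorm_restrict_union_le {α ε : Type*} {m : MeasurableSpace α}
    [TopologicalSpace ε] [ContinuousENorm ε]
    (f : α → ε) (p : ℝ≥0∞) (μ : Measure α) (s t : Set α) :
    eLpNorm f p (μ.restrict (s ∪ t)) ≤
      2 ^ p.toReal⁻¹ * max (eLpNorm f p (μ.restrict s)) (eLpNorm f p (μ.restrict t)) :=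
  (eLpNorm_mono_measure f (Measure.restrict_union_le s t)).trans (eLpNorm_add_measure_le f p _ _)

theorem ENNReal.inv_toReal_lt_of_one_lt_ofReal_mul {α : ℝ} {p : ℝ≥0∞}
    (h : 1 < ENNReal.ofReal α * p) :
    p.toReal⁻¹ < α := by
  rcases eq_or_ne p ∞ with rfl | hp
  · by_contra! hα
    simp [ENNReal.ofReal_eq_zero.2 (by simpa using hα)] at h
  have hp0 : 0 < p.toReal := by
    refine toReal_pos (fun hp0 => ?_) hp
    simp [hp0] at h
  rw [← ofReal_toReal hp, ← ofReal_mul' hp0.le, ← ofReal_one, ofReal_lt_ofReal_iff'] at h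
  rw [inv_lt_iff_one_lt_mul₀ hp0]
  linarith [h.1]

section Besov

variable {X : Type*} [NormedAddCommGroup X] {p : ℝ≥0∞} {α : ℝ} {f : ℝ → X}

noncomputable def besovSeminorm (p : ℝ≥0∞) (α : ℝ) (I : Set ℝ) (f : ℝ → X) : ℝ≥0∞ :=
  ⨆ (t : ℝ) (_ : 0 < t), ENNReal.ofReal (t ^ (-α)) * omegaLp p I f t

theorem besovInftyNorm_eq_add (p : ℝ≥0∞) (α : ℝ) (I : Set ℝ) (f : ℝ → X) :
    besovInftyNorm p α I f = eLpNorm f p (volume.restrict I) + besovSeminorm p α I f :=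
  rfl

theorem eLpNorm_sub_le_omegaLp {I A : Set ℝ} {h t : ℝ} (hh : |h| ≤ t)
    (hA : A ⊆ {s | s ∈ I ∧ s + h ∈ I}) :
    eLpNorm (fun s => f (s + h) - f s) p (volume.restrict A) ≤ omegaLp p I f t :=
  (eLpNorm_mono_measure _ (Measure.restrict_mono hA le_rfl)).trans <|
    le_iSup₂ (f := fun h (_ : |h| ≤ t) =>
      eLpNorm (fun s => f (s + h) - f s) p (volume.restrict {s | s ∈ I ∧ s + h ∈ I})) h hh

theorem omegaLp_mono {I : Set ℝ} {t t' : ℝ} (htt' : t ≤ t') : omegaLp p I f t ≤ omegaLp p I f t' :=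
  biSup_mono fun _ hh => hh.trans htt'

theorem omegaLp_le_rpow_mul_besovSeminorm {I : Set ℝ} {t : ℝ} (ht : 0 < t) :
    omegaLp p I f t ≤ ENNReal.ofReal (t ^ α) * besovSeminorm p α I f :=
  calc omegaLp p I f t
      = ENNReal.ofReal (t ^ α) * (ENNReal.ofReal (t ^ (-α)) * omegaLp p I f t) := by
        rw [← mul_assoc, ← ofReal_mul (by positivity), ← Real.rpow_add ht, add_neg_cancel,
          Real.rpow_zero, ofReal_one, one_mul]
    _ ≤ ENNReal.ofReal (t ^ α) * besovSeminorm p α I f := by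
        gcongr
        exact le_iSup₂ (f := fun t (_ : 0 < t) => ENNReal.ofReal (t ^ (-α)) * omegaLp p I f t) t ht

theorem omegaLp_univ (p : ℝ≥0∞) (f : ℝ → X) (t : ℝ) :
    omegaLp p univ f t = ⨆ (h : ℝ) (_ : |h| ≤ t), eLpNorm (fun s => f (s + h) - f s) p volume := by
  simp [omegaLp]

theorem eLpNorm_Ioc_two_mul_le (hp : 1 ≤ p) (hf : Continuous f) {m : ℝ} (hm : 0 ≤ m) :
    eLpNorm f p (volume.restrict (Ioc 0 (2 * m))) ≤
      2 ^ p.toReal⁻¹ * (eLpNorm f p (volume.restrict (Ioc 0 m)) + omegaLp p (Ioi 0) f m) := by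
  have hpre : (· + m) ⁻¹' Ioc m (2 * m) = Ioc 0 m := by
    ext s
    simp only [mem_preimage, mem_Ioc]
    constructor <;> rintro ⟨h₁, h₂⟩ <;> constructor <;> linarith
  have hshift : eLpNorm f p (volume.restrict (Ioc m (2 * m))) =
      eLpNorm (fun s => f (s + m)) p (volume.restrict (Ioc 0 m)) := by
    rw [← hpre]
    exact (eLpNorm_comp_measurePreserving hf.aestronglyMeasurable
      ((measurePreserving_add_right volume m).restrict_preimage measurableSet_Ioc)).symm
  have hsecond : eLpNorm f p (volume.restrict (Ioc m (2 * m))) ≤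
      eLpNorm f p (volume.restrict (Ioc 0 m)) + omegaLp p (Ioi 0) f m := by
    rw [hshift, add_comm]
    calc eLpNorm (fun s => f (s + m)) p (volume.restrict (Ioc 0 m))
        = eLpNorm ((fun s => f (s + m) - f s) + f) p (volume.restrict (Ioc 0 m)) := by
          simp only [Pi.add_def, sub_add_cancel]
      _ ≤ eLpNorm (fun s => f (s + m) - f s) p (volume.restrict (Ioc 0 m)) +
            eLpNorm f p (volume.restrict (Ioc 0 m)) :=
          eLpNorm_add_le ((hf.comp (continuous_add_const m)).sub hf).aestronglyMeasurable
            hf.aestronglyMeasurable hp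
      _ ≤ omegaLp p (Ioi 0) f m + eLpNorm f p (volume.restrict (Ioc 0 m)) := by
          gcongr
          exact eLpNorm_sub_le_omegaLp (abs_of_nonneg hm).le
            fun s hs => ⟨hs.1, show 0 < s + m by linarith [hs.1]⟩
  calc eLpNorm f p (volume.restrict (Ioc 0 (2 * m)))
      ≤ 2 ^ p.toReal⁻¹ * max (eLpNorm f p (volume.restrict (Ioc 0 m)))
          (eLpNorm f p (volume.restrict (Ioc m (2 * m)))) := by
        rw [← Ioc_union_Ioc_eq_Ioc hm (by linarith)]
        exact eLpNorm_restrict_union_le f p volume _ _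
    _ ≤ 2 ^ p.toReal⁻¹ * (eLpNorm f p (volume.restrict (Ioc 0 m)) + omegaLp p (Ioi 0) f m) := by
        gcongr
        exact max_le le_self_add hsecond

-- `ρ / (1 - ρ) = ∑_{j ≥ 1} ρ ^ j` for the dyadic ratio `ρ = 2 ^ (1/p - α)`.
noncomputable def boundaryConst (p : ℝ≥0∞) (α : ℝ) : ℝ :=
  2 ^ (p.toReal⁻¹ - α) / (1 - 2 ^ (p.toReal⁻¹ - α))

theorem boundaryConst_nonneg (hpα : p.toReal⁻¹ < α) : 0 ≤ boundaryConst p α :=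
  div_nonneg (by positivity)
    (sub_nonneg.2 (Real.rpow_le_one_of_one_le_of_nonpos one_le_two (by linarith)))

theorem two_rpow_mul_half_rpow_mul_boundaryConst_add_one (hpα : p.toReal⁻¹ < α) {r : ℝ}
    (hr : 0 ≤ r) :
    2 ^ p.toReal⁻¹ * (r / 2) ^ α * (boundaryConst p α + 1) = r ^ α * boundaryConst p α := by
  have hρ : (2 : ℝ) ^ (p.toReal⁻¹ - α) < 1 :=
    Real.rpow_lt_one_of_one_lt_of_neg one_lt_two (by linarith)
  have hscale : 2 ^ p.toReal⁻¹ * (r / 2) ^ α = r ^ α * 2 ^ (p.toReal⁻¹ - α) := by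
    rw [Real.div_rpow hr zero_le_two, Real.rpow_sub zero_lt_two]
    ring
  rw [hscale, boundaryConst]
  field_simp [(sub_pos.2 hρ).ne']
  ring

theorem eLpNorm_Ioc_le_pow_mul_add (hp : 1 ≤ p) (hpα : p.toReal⁻¹ < α) (hf : Continuous f)
    (n : ℕ) {r : ℝ} (hr : 0 < r) :
    eLpNorm f p (volume.restrict (Ioc 0 r)) ≤
      (2 ^ p.toReal⁻¹) ^ n * eLpNorm f p (volume.restrict (Ioc 0 (r / 2 ^ n))) +
        ENNReal.ofReal (r ^ α * boundaryConst p α) * besovSeminorm p α (Ioi 0) f := by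
  induction n generalizing r with
  | zero => simp
  | succ n ih =>
    set S := besovSeminorm p α (Ioi 0) f
    have hK := boundaryConst_nonneg hpα
    have hc : (2 : ℝ≥0∞) ^ p.toReal⁻¹ = ENNReal.ofReal (2 ^ p.toReal⁻¹) := by
      rw [← ofReal_rpow_of_pos zero_lt_two, ofReal_ofNat]
    calc eLpNorm f p (volume.restrict (Ioc 0 r))
        ≤ 2 ^ p.toReal⁻¹ * (eLpNorm f p (volume.restrict (Ioc 0 (r / 2))) +
            omegaLp p (Ioi 0) f (r / 2)) := by
          simpa only [mul_div_cancel₀ r two_ne_zero] using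
            eLpNorm_Ioc_two_mul_le hp hf (half_pos hr).le
      _ ≤ 2 ^ p.toReal⁻¹ * ((2 ^ p.toReal⁻¹) ^ n *
              eLpNorm f p (volume.restrict (Ioc 0 (r / 2 / 2 ^ n))) +
            ENNReal.ofReal ((r / 2) ^ α * boundaryConst p α) * S +
            ENNReal.ofReal ((r / 2) ^ α) * S) := by
          gcongr
          exacts [ih (half_pos hr), omegaLp_le_rpow_mul_besovSeminorm (half_pos hr)]
      _ = (2 ^ p.toReal⁻¹) ^ (n + 1) *
              eLpNorm f p (volume.restrict (Ioc 0 (r / 2 ^ (n + 1)))) +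
            ENNReal.ofReal (2 ^ p.toReal⁻¹ * (r / 2) ^ α * (boundaryConst p α + 1)) * S := by
          rw [div_div, ← pow_succ', hc, ofReal_mul (by positivity), ofReal_mul (by positivity),
            ofReal_add hK zero_le_one, ofReal_one,
            ofReal_mul (by positivity)]
          ring
      _ = _ := by rw [two_rpow_mul_half_rpow_mul_boundaryConst_add_one hpα hr.le]

theorem tendsto_eLpNorm_top_Ioc_zero (hf : ContinuousAt f 0) (hf0 : f 0 = 0) :
    Tendsto (fun δ => eLpNorm f ∞ (volume.restrict (Ioc 0 δ))) (𝓝 0) (𝓝 0) := by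
  refine ENNReal.tendsto_nhds_zero.2 fun ε hε => ?_
  have hsmall : ∀ᶠ x in 𝓝 (0 : ℝ), ‖f x‖ₑ ≤ ε := by
    have := (continuous_enorm.tendsto _).comp hf
    rw [Function.comp_def, hf0, enorm_zero] at this
    exact ENNReal.tendsto_nhds_zero.1 this ε hε
  obtain ⟨η, hη, hsmall⟩ := Metric.eventually_nhds_iff.1 hsmall
  refine Metric.eventually_nhds_iff.2 ⟨η, hη, fun δ hδ => ?_⟩
  rw [eLpNorm_exponent_top]
  refine eLpNormEssSup_le_of_ae_enorm_bound ((ae_restrict_iff' measurableSet_Ioc).2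
    (ae_of_all _ fun x hx => hsmall ?_))
  rw [Real.dist_eq, sub_zero] at hδ ⊢
  rw [abs_of_pos hx.1]
  exact hx.2.trans_lt ((le_abs_self δ).trans_lt hδ)

theorem tendsto_pow_mul_eLpNorm_Ioc_div_pow (hf : ContinuousAt f 0) (hf0 : f 0 = 0) (r : ℝ) :
    Tendsto (fun n : ℕ => (2 ^ p.toReal⁻¹) ^ n * eLpNorm f p (volume.restrict (Ioc 0 (r / 2 ^ n))))
      atTop (𝓝 0) := by
  have hbound : ∀ n : ℕ, (2 ^ p.toReal⁻¹) ^ n * eLpNorm f p (volume.restrict (Ioc 0 (r / 2 ^ n))) ≤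
      ENNReal.ofReal r ^ p.toReal⁻¹ * eLpNorm f ∞ (volume.restrict (Ioc 0 (r / 2 ^ n))) := by
    intro n
    have hmeas : volume.restrict (Ioc (0 : ℝ) (r / 2 ^ n)) univ =
        ENNReal.ofReal r / 2 ^ n := by
      rw [Measure.restrict_apply_univ, Real.volume_Ioc, sub_zero,
        ofReal_div_of_pos (by positivity), ofReal_pow zero_le_two, ofReal_ofNat]
    have hpow : ((2 : ℝ≥0∞) ^ n) ^ p.toReal⁻¹ = (2 ^ p.toReal⁻¹) ^ n := by
      rw [← rpow_natCast, ← rpow_natCast, ← rpow_mul, ← rpow_mul, mul_comm]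
    calc (2 ^ p.toReal⁻¹) ^ n * eLpNorm f p (volume.restrict (Ioc 0 (r / 2 ^ n)))
        ≤ (2 ^ p.toReal⁻¹) ^ n * (eLpNorm f ∞ (volume.restrict (Ioc 0 (r / 2 ^ n))) *
            (ENNReal.ofReal r / 2 ^ n) ^ p.toReal⁻¹) := by
          gcongr
          rw [← hmeas, eLpNorm_exponent_top, ← smul_eq_mul]
          exact eLpNorm_le_of_ae_enorm_bound ae_le_eLpNormEssSup
      _ = ENNReal.ofReal r ^ p.toReal⁻¹ * eLpNorm f ∞ (volume.restrict (Ioc 0 (r / 2 ^ n))) := by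
          rw [div_rpow_of_nonneg _ _ (by positivity), hpow, mul_comm, mul_assoc,
            ENNReal.div_mul_cancel (by positivity) (by simp), mul_comm]
  have hlim : Tendsto (fun n : ℕ => ENNReal.ofReal r ^ p.toReal⁻¹ *
      eLpNorm f ∞ (volume.restrict (Ioc 0 (r / 2 ^ n)))) atTop (𝓝 0) := by
    have hδ : Tendsto (fun n : ℕ => r / 2 ^ n) atTop (𝓝 0) := by
      simpa [div_eq_mul_inv] using
        (tendsto_pow_atTop_nhds_zero_of_lt_one (by norm_num : (0 : ℝ) ≤ 2⁻¹)
          (by norm_num)).const_mul r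
    simpa using ENNReal.Tendsto.const_mul ((tendsto_eLpNorm_top_Ioc_zero hf hf0).comp hδ)
      (Or.inr (rpow_ne_top_of_nonneg (by positivity) ofReal_ne_top))
  exact tendsto_of_tendsto_of_tendsto_of_le_of_le tendsto_const_nhds hlim (fun _ => zero_le)
    hbound

theorem eLpNorm_Ioc_zero_le_besovSeminorm (hp : 1 ≤ p) (hpα : p.toReal⁻¹ < α)
    (hf : Continuous f) (hf0 : f 0 = 0) {r : ℝ} (hr : 0 < r) :
    eLpNorm f p (volume.restrict (Ioc 0 r)) ≤
      ENNReal.ofReal (r ^ α * boundaryConst p α) * besovSeminorm p α (Ioi 0) f :=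
  ge_of_tendsto' (by simpa using
      (tendsto_pow_mul_eLpNorm_Ioc_div_pow hf.continuousAt hf0 r).add_const _)
    fun n => eLpNorm_Ioc_le_pow_mul_add hp hpα hf n hr

theorem eLpNorm_comp_add_neg_sub (hf : Continuous f) (h : ℝ) :
    eLpNorm (fun s => f (s + -h) - f s) p volume = eLpNorm (fun s => f (s + h) - f s) p volume := by
  have hg : Continuous fun s => f (s + -h) - f s := (hf.comp (continuous_add_const _)).sub hf
  rw [← eLpNorm_comp_measurePreserving hg.aestronglyMeasurable
    (measurePreserving_add_right volume h), ← eLpNorm_neg]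
  congr 1
  ext s
  simp

theorem support_subset_Ioi_zero (hf0 : ∀ x ≤ 0, f x = 0) : f.support ⊆ Ioi 0 :=
  fun x hx => lt_of_not_ge fun hx' => hx (hf0 x hx')

theorem eLpNorm_comp_add_sub_le (hf : Continuous f) (hf0 : ∀ x ≤ 0, f x = 0)
    {h : ℝ} (hh : 0 ≤ h) :
    eLpNorm (fun s => f (s + h) - f s) p volume ≤
      2 ^ p.toReal⁻¹ * max (eLpNorm f p (volume.restrict (Ioc 0 h))) (omegaLp p (Ioi 0) f h) := by
  have hleft : eLpNorm (fun s => f (s + h) - f s) p (volume.restrict (Iic 0)) =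
      eLpNorm f p (volume.restrict (Ioc 0 h)) := by
    have hpre : (· + h) ⁻¹' Iic h = Iic 0 := by ext s; simp
    calc eLpNorm (fun s => f (s + h) - f s) p (volume.restrict (Iic 0))
        = eLpNorm (fun s => f (s + h)) p (volume.restrict (Iic 0)) :=
          eLpNorm_congr_ae ((ae_restrict_iff' measurableSet_Iic).2
            (ae_of_all _ fun s hs => by simp [hf0 s hs]))
      _ = eLpNorm f p (volume.restrict (Iic h)) := by
          rw [← hpre]
          exact eLpNorm_comp_measurePreserving hf.aestronglyMeasurable
            ((measurePreserving_add_right volume h).restrict_preimage measurableSet_Iic)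
      _ = eLpNorm f p (volume.restrict (Ioc 0 h)) := by
          rw [← eLpNorm_restrict_eq_of_support_subset (support_subset_Ioi_zero hf0),
            Measure.restrict_restrict measurableSet_Ioi, Ioi_inter_Iic]
  calc eLpNorm (fun s => f (s + h) - f s) p volume
      = eLpNorm (fun s => f (s + h) - f s) p (volume.restrict (Iic 0 ∪ Ioi 0)) := by
        rw [Iic_union_Ioi, Measure.restrict_univ]
    _ ≤ 2 ^ p.toReal⁻¹ * max (eLpNorm (fun s => f (s + h) - f s) p (volume.restrict (Iic 0)))
          (eLpNorm (fun s => f (s + h) - f s) p (volume.restrict (Ioi 0))) :=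
        eLpNorm_restrict_union_le _ p volume _ _
    _ ≤ _ := by
        rw [hleft]
        gcongr
        exact eLpNorm_sub_le_omegaLp (abs_of_nonneg hh).le
          fun s hs => ⟨hs, show 0 < s + h by linarith [mem_Ioi.1 hs]⟩

theorem besovSeminorm_le_of_omegaLp_le {I : Set ℝ} {C : ℝ≥0∞}
    (h : ∀ t, 0 < t → omegaLp p I f t ≤ ENNReal.ofReal (t ^ α) * C) :
    besovSeminorm p α I f ≤ C :=
  iSup₂_le fun t ht => calc
    ENNReal.ofReal (t ^ (-α)) * omegaLp p I f t
      ≤ ENNReal.ofReal (t ^ (-α)) * (ENNReal.ofReal (t ^ α) * C) := by gcongr; exact h t ht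
    _ = C := by
      rw [← mul_assoc, ← ofReal_mul (by positivity), ← Real.rpow_add ht, neg_add_cancel,
        Real.rpow_zero, ofReal_one, one_mul]

theorem omegaLp_univ_le (hp : 1 ≤ p) (hpα : p.toReal⁻¹ < α) (hf : Continuous f)
    (hf0 : ∀ x ≤ 0, f x = 0) {t : ℝ} (ht : 0 < t) :
    omegaLp p univ f t ≤ ENNReal.ofReal (t ^ α) *
      (2 ^ p.toReal⁻¹ * ENNReal.ofReal (boundaryConst p α + 1) * besovSeminorm p α (Ioi 0) f) := by
  rw [omegaLp_univ]
  refine iSup₂_le fun h hh => ?_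
  have hsymm : eLpNorm (fun s => f (s + h) - f s) p volume =
      eLpNorm (fun s => f (s + |h|) - f s) p volume := by
    rcases abs_choice h with habs | habs <;> rw [habs]
    exact (eLpNorm_comp_add_neg_sub hf h).symm
  have hK := boundaryConst_nonneg hpα
  calc eLpNorm (fun s => f (s + h) - f s) p volume
      ≤ 2 ^ p.toReal⁻¹ * max (eLpNorm f p (volume.restrict (Ioc 0 |h|)))
          (omegaLp p (Ioi 0) f |h|) := hsymm ▸ eLpNorm_comp_add_sub_le hf hf0 (abs_nonneg h)
    _ ≤ 2 ^ p.toReal⁻¹ * (eLpNorm f p (volume.restrict (Ioc 0 t)) + omegaLp p (Ioi 0) f t) := by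
        refine mul_le_mul_right (max_le (le_add_right ?_) (le_add_left (omegaLp_mono hh))) _
        exact eLpNorm_mono_measure _ (Measure.restrict_mono (Ioc_subset_Ioc_right hh) le_rfl)
    _ ≤ 2 ^ p.toReal⁻¹ * (ENNReal.ofReal (t ^ α * boundaryConst p α) * besovSeminorm p α (Ioi 0) f +
          ENNReal.ofReal (t ^ α) * besovSeminorm p α (Ioi 0) f) := by
        gcongr
        exacts [eLpNorm_Ioc_zero_le_besovSeminorm hp hpα hf (hf0 0 le_rfl) ht,
          omegaLp_le_rpow_mul_besovSeminorm ht]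
    _ = _ := by
        rw [ofReal_mul (by positivity), ofReal_add hK zero_le_one, ofReal_one]
        ring

end Besov

theorem stmt15_general {X : Type*} [NormedAddCommGroup X]
    (p : ℝ≥0∞) (hp : 1 < p) (α : ℝ)
    (hαp : 1 < ENNReal.ofReal α * p) :
    ∃ C > (0:ℝ), ∀ f : ℝ → X, Continuous f → (∀ x ≤ (0:ℝ), f x = 0) →
      besovInftyNorm p α univ f ≤ ENNReal.ofReal C * besovInftyNorm p α (Ioi 0) f := by
  have hpα := inv_toReal_lt_of_one_lt_ofReal_mul hαp
  set A : ℝ≥0∞ := 2 ^ p.toReal⁻¹ * ENNReal.ofReal (boundaryConst p α + 1)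
  have hA : 1 + A ≠ ∞ :=
    add_ne_top.2 ⟨one_ne_top, mul_ne_top (rpow_ne_top_of_nonneg (by positivity) ofNat_ne_top)
      ofReal_ne_top⟩
  refine ⟨(1 + A).toReal, toReal_pos (by positivity) hA, fun f hf hf0 => ?_⟩
  have hLp : eLpNorm f p (volume.restrict univ) = eLpNorm f p (volume.restrict (Ioi 0)) := by
    rw [Measure.restrict_univ, eLpNorm_restrict_eq_of_support_subset (support_subset_Ioi_zero hf0)]
  have hsemi : besovSeminorm p α univ f ≤ A * besovSeminorm p α (Ioi 0) f :=
    besovSeminorm_le_of_omegaLp_le fun t ht => omegaLp_univ_le hp.le hpα hf hf0 ht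
  rw [ofReal_toReal hA, besovInftyNorm_eq_add, besovInftyNorm_eq_add, hLp]
  calc eLpNorm f p (volume.restrict (Ioi 0)) + besovSeminorm p α univ f
      ≤ eLpNorm f p (volume.restrict (Ioi 0)) + A * besovSeminorm p α (Ioi 0) f := by gcongr
    _ ≤ (eLpNorm f p (volume.restrict (Ioi 0)) + besovSeminorm p α (Ioi 0) f) +
          (A * eLpNorm f p (volume.restrict (Ioi 0)) + A * besovSeminorm p α (Ioi 0) f) :=
        add_le_add le_self_add le_add_self
    _ = (1 + A) * (eLpNorm f p (volume.restrict (Ioi 0)) + besovSeminorm p α (Ioi 0) f) := by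
        ring

/-- Extension by zero: for `αp > 1` there is `C` with
`‖f‖_{B^α_{p,∞}(ℝ;X)} ≤ C ‖f‖_{B^α_{p,∞}((0,∞);X)}` for continuous `f` vanishing on `(-∞,0]`. -/
theorem stmt15 {X : Type*} [NormedAddCommGroup X]
    (p : ℝ≥0∞) (hp : 1 < p) (α : ℝ) (hα : 0 < α) (hα1 : α < 1)
    (hαp : 1 < ENNReal.ofReal α * p) :
    ∃ C > (0:ℝ), ∀ f : ℝ → X, Continuous f → (∀ x ≤ (0:ℝ), f x = 0) →
      besovInftyNorm p α univ f ≤ ENNReal.ofReal C * besovInftyNorm p α (Ioi 0) f :=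
  stmt15_general p hp α hαp
end
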